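/- arXiv:0909.4509 — 7 statements merged into one kernel-verified Lean document; each statement's English description precedes it below -/
import Mathlib

section
/- Let f be a Laurent series that is analytic on the annulus A[r1,r2] with 0 < r1 ≤ r2, and let z0 ∈ A[r1,r2]. Then |f(z0)| ≤ |f|_{|z0|}. Moreover, there exists a finite subset T of the residue field F̃ such that for every z with |z| = |z0| and |f(z)| < |f|_{|z0|}, the residue class of z/z0 in F̃ belongs to T. -/
open Filter Topology

variable {F : Type*} [NontriviallyNormedField F]

/-- Value of the power series with coefficients `a` at `z`. -/
noncomputable def psEval (a : ℕ → F) (z : F) : F := ∑' n : ℕ, a n * z ^ n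

/-- Value of the Laurent series with coefficients `c` at `z`. -/
noncomputable def lEval (c : ℤ → F) (z : F) : F := ∑' n : ℤ, c n * z ^ n

/-- Gauss norm `|f|_r = sup_n |a_n| r^n` of a power series. -/
noncomputable def pNorm (a : ℕ → F) (r : ℝ) : ℝ := ⨆ n : ℕ, ‖a n‖ * r ^ n

/-- Gauss norm `|f|_r = sup_n |c_n| r^n` of a Laurent series. -/
noncomputable def lNorm (c : ℤ → F) (r : ℝ) : ℝ := ⨆ n : ℤ, ‖c n‖ * r ^ n

/-- The Laurent series `c` is analytic on the annulus `A[r1,r2]`. -/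
def LaurentOn (c : ℤ → F) (r1 r2 : ℝ) : Prop :=
  ∀ r : ℝ, r1 ≤ r → r ≤ r2 → Tendsto (fun n : ℤ => ‖c n‖ * r ^ n) cofinite (nhds 0)

/-- The Laurent series `c` is analytic on `A[r1,∞)`. -/
def LaurentOnInfty (c : ℤ → F) (r1 : ℝ) : Prop :=
  ∀ r : ℝ, r1 ≤ r → Tendsto (fun n : ℤ => ‖c n‖ * r ^ n) cofinite (nhds 0)

/-- The power series `a` is analytic on the closed ball `B_{≤ r}`. -/
def PSOnClosed (a : ℕ → F) (r : ℝ) : Prop :=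
  Tendsto (fun n : ℕ => ‖a n‖ * r ^ n) atTop (nhds 0)

/-- The power series `a` is analytic on the open ball `B_{< R}`. -/
def PSOnOpen (a : ℕ → F) (R : ℝ) : Prop :=
  ∀ r : ℝ, 0 < r → r < R → Tendsto (fun n : ℕ => ‖a n‖ * r ^ n) atTop (nhds 0)

/-- The power series `a` is entire: it converges on all of `F`. -/
def Entire (a : ℕ → F) : Prop :=
  ∀ r : ℝ, 0 < r → Tendsto (fun n : ℕ => ‖a n‖ * r ^ n) atTop (nhds 0)

/-- `k(f,r)` for a Laurent series. -/
noncomputable def kk (c : ℤ → F) (r : ℝ) : ℤ := sInf {n : ℤ | ‖c n‖ * r ^ n = lNorm c r}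

/-- `K(f,r)` for a Laurent series. -/
noncomputable def KK (c : ℤ → F) (r : ℝ) : ℤ := sSup {n : ℤ | ‖c n‖ * r ^ n = lNorm c r}

/-- Product of two Laurent series. -/
noncomputable def laurentMul (c d : ℤ → F) : ℤ → F := fun n => ∑' i : ℤ, c i * d (n - i)

/-- The Laurent series `1`. -/
noncomputable def laurentOne : ℤ → F := fun n => if n = 0 then 1 else 0

/-- Gauss norm of a polynomial. -/
noncomputable def pgNorm (P : Polynomial F) (r : ℝ) : ℝ := ⨆ n : ℕ, ‖P.coeff n‖ * r ^ n

/-- `k(P,r)` for a polynomial. -/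
noncomputable def kP (P : Polynomial F) (r : ℝ) : ℕ :=
  sInf {n : ℕ | ‖P.coeff n‖ * r ^ n = pgNorm P r}

/-- `K(P,r)` for a polynomial. -/
noncomputable def KP (P : Polynomial F) (r : ℝ) : ℕ :=
  sSup {n : ℕ | ‖P.coeff n‖ * r ^ n = pgNorm P r}

/-- A polynomial regarded as a Laurent series. -/
noncomputable def polyToLaurent (P : Polynomial F) : ℤ → F :=
  fun n => if 0 ≤ n then P.coeff n.toNat else 0

/-- `f` vanishes to order exactly `m` at `z0`, as witnessed by a convergent local
power series expansion of `f` about `z0`. -/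
def HasOrderAt (f : F → F) (z0 : F) (m : ℕ) : Prop :=
  ∃ δ > (0 : ℝ), ∃ b : ℕ → F,
    (∀ z : F, ‖z - z0‖ < δ → f z = ∑' n : ℕ, b n * (z - z0) ^ n) ∧
    (∀ j < m, b j = 0) ∧ b m ≠ 0

/-- Order of vanishing at `0` of a power series. -/
noncomputable def ord0 (c : ℕ → F) : ℕ := sInf {n : ℕ | c n ≠ 0}

/-- Radius of convergence of a power series: the sup of the radii `r` such that
the terms `|c_j| r^j` tend to `0`. -/
noncomputable def convRadius (c : ℕ → F) : ENNReal :=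
  ⨆ (r : NNReal) (_ : Tendsto (fun j : ℕ => ‖c j‖ * (r : ℝ) ^ j) atTop (nhds 0)), (r : ENNReal)

/-- The ring of integers `O = {z : |z| ≤ 1}` of a non-Archimedean field. -/
def integerRing (hna : IsNonarchimedean (fun x : F => ‖x‖)) : Subring F where
  carrier := {z : F | ‖z‖ ≤ 1}
  mul_mem' := by
    intro a b ha hb
    simp only [Set.mem_setOf_eq] at *
    rw [norm_mul]
    nlinarith [norm_nonneg a, norm_nonneg b]
  one_mem' := by simp
  add_mem' := by
    intro a b ha hb
    simp only [Set.mem_setOf_eq] at *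
    exact le_trans (hna a b) (max_le ha hb)
  zero_mem' := by simp
  neg_mem' := by
    intro a ha
    simpa using ha

/-- The maximal ideal `M = {z : |z| < 1}` of the ring of integers. -/
def maxIdeal (hna : IsNonarchimedean (fun x : F => ‖x‖)) : Ideal (integerRing hna) where
  carrier := {z : integerRing hna | ‖(z : F)‖ < 1}
  add_mem' := by
    intro a b ha hb
    simp only [Set.mem_setOf_eq] at *
    calc ‖((a + b : integerRing hna) : F)‖ = ‖(a : F) + (b : F)‖ := by norm_cast
    _ ≤ max ‖(a : F)‖ ‖(b : F)‖ := hna _ _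
    _ < 1 := max_lt ha hb
  zero_mem' := by simp
  smul_mem' := by
    intro c x hx
    simp only [Set.mem_setOf_eq, smul_eq_mul] at *
    calc ‖((c * x : integerRing hna) : F)‖ = ‖(c : F)‖ * ‖(x : F)‖ := by
          push_cast; exact norm_mul _ _
    _ < 1 := by
          have hc : ‖(c : F)‖ ≤ 1 := c.2
          nlinarith [norm_nonneg (c : F), norm_nonneg (x : F)]

/-! On the circle `‖z‖ = r` the terms `c n * z ^ n` have norms `‖c n‖ * r ^ n → 0`, so the
ultrametric inequality bounds `‖f z‖` by their maximum `|f|_r`. That maximum is attained on a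
finite set `S` of indices, and all other terms are strictly smaller. Dividing the dominant part
`∑ n ∈ S, c n * z ^ n` by `c k * z0 ^ k` (`k = min S`) gives, up to the unit `(z / z0) ^ k`, a
polynomial in `u = z / z0` with integral coefficients and constant term `1`. If `‖f z‖ < |f|_r`
this polynomial is small at `u`, so the residue class of `u` is a root of its (nonzero)
reduction over the residue field, and there are finitely many such roots. -/

open Polynomial

theorem exists_forall_le_of_tendsto_cofinite_zero {ι : Type*} [Nonempty ι] {t : ι → ℝ}
    (h0 : ∀ i, 0 ≤ t i) (ht : Tendsto t cofinite (𝓝 0)) : ∃ N, ∀ i, t i ≤ t N := by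
  by_cases! hpos : ∃ i, 0 < t i
  · obtain ⟨i0, hi0⟩ := hpos
    have hfin : {i | t i0 ≤ t i}.Finite := by
      simpa using eventually_cofinite.mp (ht.eventually (gt_mem_nhds hi0))
    obtain ⟨N, hN, hmax⟩ := Set.exists_max_image _ t hfin ⟨i0, le_refl (t i0)⟩
    exact ⟨N, fun i => (le_or_gt (t i0) (t i)).elim (hmax i) fun h => h.le.trans hN⟩
  · exact ⟨Classical.arbitrary ι, fun i => (hpos i).trans (h0 _)⟩

section Ultrametric

variable {E ι : Type*} [NormedAddCommGroup E] [IsUltrametricDist E]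

theorem norm_tsum_compl_lt {f : ι → E} (hf : Tendsto (fun i => ‖f i‖) cofinite (𝓝 0))
    (s : Finset ι) {M : ℝ} (hM : 0 < M) (hs : ∀ i ∉ s, ‖f i‖ < M) :
    ‖∑' i : ↑(s : Set ι)ᶜ, f i‖ < M := by
  rcases isEmpty_or_nonempty ↑(s : Set ι)ᶜ with hempty | hne
  · simpa using hM
  · obtain ⟨N, hN⟩ := exists_forall_le_of_tendsto_cofinite_zero
      (t := fun i : ↑(s : Set ι)ᶜ => ‖f i‖) (fun _ => norm_nonneg _)
      (hf.comp Subtype.coe_injective.tendsto_cofinite)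
    exact (IsUltrametricDist.norm_tsum_le_of_forall_le_of_nonneg (norm_nonneg _) hN).trans_lt
      (hs N N.2)

theorem norm_sum_lt_of_norm_tsum_lt [CompleteSpace E] {f : ι → E}
    (hf : Tendsto (fun i => ‖f i‖) cofinite (𝓝 0)) (s : Finset ι) {M : ℝ}
    (hs : ∀ i ∉ s, ‖f i‖ < M) (h : ‖∑' i, f i‖ < M) : ‖∑ i ∈ s, f i‖ < M := by
  have hsum : Summable f := NonarchimedeanAddGroup.summable_of_tendsto_cofinite_zero
    (tendsto_zero_iff_norm_tendsto_zero.mpr hf)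
  rw [eq_sub_of_add_eq hsum.sum_add_tsum_compl, sub_eq_add_neg]
  refine (IsUltrametricDist.norm_add_le_max _ _).trans_lt (max_lt h ?_)
  rw [norm_neg]
  exact norm_tsum_compl_lt hf s ((norm_nonneg _).trans_lt h) hs

end Ultrametric

theorem norm_lEval_le_lNorm [IsUltrametricDist F] (c : ℤ → F) (z : F) :
    ‖lEval c z‖ ≤ lNorm c ‖z‖ := by
  simpa only [lEval, lNorm, norm_mul, norm_zpow] using
    IsUltrametricDist.norm_tsum_le fun n => c n * z ^ n

theorem Polynomial.mk_mem_roots_map_of_eval_mem {R : Type*} [CommRing R] {I : Ideal R} [I.IsPrime]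
    {P : R[X]} (hP : P.map (Ideal.Quotient.mk I) ≠ 0) {w : R} (hw : P.eval w ∈ I) :
    Ideal.Quotient.mk I w ∈ (P.map (Ideal.Quotient.mk I)).roots := by
  rwa [mem_roots hP, IsRoot, eval_map_apply, Ideal.Quotient.eq_zero_iff_mem]

section Residue

variable (hna : IsNonarchimedean (fun x : F => ‖x‖))

theorem mem_maxIdeal {x : integerRing hna} : x ∈ maxIdeal hna ↔ ‖(x : F)‖ < 1 := Iff.rfl

instance maxIdeal.isPrime : (maxIdeal hna).IsPrime where
  ne_top' h := by
    have h1 : (1 : integerRing hna) ∈ maxIdeal hna := h ▸ Submodule.mem_top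
    simp [mem_maxIdeal] at h1
  mem_or_mem' {x y} hxy := by
    by_contra! h
    have hx : ‖(x : F)‖ = 1 := le_antisymm x.2 (not_lt.mp h.1)
    have hy : ‖(y : F)‖ = 1 := le_antisymm y.2 (not_lt.mp h.2)
    simp [mem_maxIdeal, hx, hy] at hxy

theorem exists_finset_residues_of_norm_sum_zpow_lt (S : Finset ℤ) {k : ℤ} (hk : k ∈ S)
    (hkS : ∀ n ∈ S, k ≤ n) (e : ℤ → integerRing hna) (hek : e k ∉ maxIdeal hna) :
    ∃ T : Finset (integerRing hna ⧸ maxIdeal hna), ∀ w : integerRing hna, ‖(w : F)‖ = 1 →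
      ‖∑ n ∈ S, (e n : F) * (w : F) ^ n‖ < 1 → Ideal.Quotient.mk (maxIdeal hna) w ∈ T := by
  classical
  set Q : (integerRing hna)[X] := ∑ n ∈ S, C (e n) * X ^ (n - k).toNat
  have hQ0 : Q.coeff 0 = e k := by
    rw [finsetSum_coeff, Finset.sum_eq_single_of_mem k hk]
    · simp
    · intro n hn hne
      have : (n - k).toNat ≠ 0 := by have := hkS n hn; omega
      simp [coeff_X_pow, this.symm]
  have hQ : Q.map (Ideal.Quotient.mk _) ≠ 0 := fun h => hek <| by
    rw [← Ideal.Quotient.eq_zero_iff_mem, ← hQ0, ← coeff_map, h, coeff_zero]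
  refine ⟨(Q.map (Ideal.Quotient.mk _)).roots.toFinset, fun w hw hlt => ?_⟩
  have hw0 : (w : F) ≠ 0 := norm_ne_zero_iff.mp (hw ▸ one_ne_zero)
  have hQw : (w : F) ^ k * ((Q.eval w : integerRing hna) : F) =
      ∑ n ∈ S, (e n : F) * (w : F) ^ n := by
    simp only [Q, eval_finsetSum, eval_mul, eval_C, eval_pow, eval_X]
    push_cast
    rw [Finset.mul_sum]
    refine Finset.sum_congr rfl fun n hn => ?_
    rw [← zpow_natCast, Int.toNat_of_nonneg (sub_nonneg.2 (hkS n hn)), mul_left_comm,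
      ← zpow_add₀ hw0, add_sub_cancel]
  rw [Multiset.mem_toFinset]
  refine mk_mem_roots_map_of_eval_mem hQ ?_
  rw [mem_maxIdeal]
  simpa [← hQw, norm_mul, norm_zpow, hw] using hlt

theorem exists_finset_residues_of_norm_sum_lt (c : ℤ → F) (z0 : F) {M : ℝ} (hM : 0 < M)
    (hle : ∀ n, ‖c n‖ * ‖z0‖ ^ n ≤ M) (S : Finset ℤ) (hS : S.Nonempty)
    (hSM : ∀ n ∈ S, ‖c n‖ * ‖z0‖ ^ n = M) :
    ∃ T : Finset (integerRing hna ⧸ maxIdeal hna), ∀ w : integerRing hna, ‖(w : F)‖ = 1 →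
      ‖∑ n ∈ S, c n * (z0 * w) ^ n‖ < M → Ideal.Quotient.mk (maxIdeal hna) w ∈ T := by
  set k := S.min' hS
  set a : F := c k * z0 ^ k
  have ha : ‖a‖ = M := by simpa [a, norm_mul, norm_zpow] using hSM k (S.min'_mem hS)
  have ha0 : a ≠ 0 := norm_ne_zero_iff.mp (ha ▸ hM.ne')
  let e : ℤ → integerRing hna := fun n => ⟨c n * z0 ^ n / a, by
    show ‖_‖ ≤ 1
    rw [norm_div, norm_mul, norm_zpow, ha]
    exact div_le_one_of_le₀ (hle n) hM.le⟩
  have hek : e k ∉ maxIdeal hna := by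
    rw [mem_maxIdeal, show (e k : F) = 1 from div_self ha0, norm_one]
    exact lt_irrefl 1
  obtain ⟨T, hT⟩ := exists_finset_residues_of_norm_sum_zpow_lt hna S (S.min'_mem hS)
    (fun n hn => S.min'_le n hn) e hek
  refine ⟨T, fun w hw hlt => hT w hw ?_⟩
  have hsum : ∑ n ∈ S, c n * (z0 * w) ^ n = a * ∑ n ∈ S, (e n : F) * (w : F) ^ n := by
    rw [Finset.mul_sum]
    refine Finset.sum_congr rfl fun n _ => ?_
    simp only [e]
    field_simp
    rw [mul_zpow, mul_assoc]
  rwa [hsum, norm_mul, ha, mul_lt_iff_lt_one_right hM] at hlt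

theorem exists_finset_residues_of_norm_lEval_lt [CompleteSpace F] (c : ℤ → F) {z0 : F}
    (hz0 : z0 ≠ 0) (hc : Tendsto (fun n : ℤ => ‖c n‖ * ‖z0‖ ^ n) cofinite (𝓝 0)) :
    ∃ T : Finset (integerRing hna ⧸ maxIdeal hna), ∀ z : F, ‖z‖ = ‖z0‖ →
      ‖lEval c z‖ < lNorm c ‖z0‖ → ∀ w : integerRing hna, (w : F) = z / z0 →
        Ideal.Quotient.mk (maxIdeal hna) w ∈ T := by
  have : IsUltrametricDist F := .isUltrametricDist_of_isNonarchimedean_norm hna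
  set t : ℤ → ℝ := fun n => ‖c n‖ * ‖z0‖ ^ n
  obtain ⟨N, hN⟩ := exists_forall_le_of_tendsto_cofinite_zero (fun n => by positivity) hc
  have hlNorm : lNorm c ‖z0‖ = t N :=
    le_antisymm (ciSup_le hN) (le_ciSup ⟨t N, Set.forall_mem_range.2 hN⟩ N)
  rcases (show 0 ≤ t N by positivity).eq_or_lt with hM0 | hM
  · exact ⟨∅, fun z _ hlt => absurd hlt (by rw [hlNorm, ← hM0]; exact not_lt.2 (norm_nonneg _))⟩
  set S : Finset ℤ := (eventually_cofinite.mp (hc.eventually (gt_mem_nhds hM))).toFinset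
  have hmemS : ∀ n, n ∈ S ↔ ¬ t n < t N := fun n => Set.Finite.mem_toFinset _
  obtain ⟨T, hT⟩ := exists_finset_residues_of_norm_sum_lt hna c z0 hM hN S
    ⟨N, (hmemS N).2 (lt_irrefl _)⟩ fun n hn => le_antisymm (hN n) (not_lt.mp ((hmemS n).1 hn))
  refine ⟨T, fun z hz hlt w hw => hT w ?_ ?_⟩
  · rw [hw, norm_div, hz, div_self (norm_ne_zero_iff.2 hz0)]
  rw [hw, mul_div_cancel₀ _ hz0]
  exact norm_sum_lt_of_norm_tsum_lt (by simpa [norm_mul, norm_zpow, hz] using hc) S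
    (fun n hn => by simpa [norm_mul, norm_zpow, hz, hmemS] using hn) (hlNorm ▸ hlt)

end Residue

theorem stmt0_general {F : Type*} [NontriviallyNormedField F] [CompleteSpace F]
    (hna : IsNonarchimedean (fun x : F => ‖x‖))
    (r1 r2 : ℝ) (hr1 : 0 < r1)
    (c : ℤ → F) (hc : LaurentOn c r1 r2)
    (z0 : F) (hz0l : r1 ≤ ‖z0‖) (hz0r : ‖z0‖ ≤ r2) :
    ‖lEval c z0‖ ≤ lNorm c ‖z0‖ ∧
      ∃ T : Finset ((integerRing hna) ⧸ (maxIdeal hna)),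
        ∀ z : F, ‖z‖ = ‖z0‖ → ‖lEval c z‖ < lNorm c ‖z0‖ →
          ∀ w : integerRing hna, (w : F) = z / z0 →
            Ideal.Quotient.mk (maxIdeal hna) w ∈ T := by
  have : IsUltrametricDist F := .isUltrametricDist_of_isNonarchimedean_norm hna
  have hz0 : z0 ≠ 0 := norm_pos_iff.mp (hr1.trans_le hz0l)
  exact ⟨norm_lEval_le_lNorm c z0,
    exists_finset_residues_of_norm_lEval_lt hna c hz0 (hc _ hz0l hz0r)⟩

/-- **Maximum modulus principle on annuli.** If `f` is analytic on `A[r1,r2]` and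
`z0 ∈ A[r1,r2]`, then `|f(z0)| ≤ |f|_{|z0|}`; moreover there is a finite set `T` of
residue classes such that whenever `|z| = |z0|` and `|f(z)| < |f|_{|z0|}`, the residue
class of `z / z0` lies in `T`. -/
theorem stmt0 {F : Type*} [NontriviallyNormedField F] [CompleteSpace F] [IsAlgClosed F]
    (hna : IsNonarchimedean (fun x : F => ‖x‖))
    (r1 r2 : ℝ) (hr1 : 0 < r1) (hr12 : r1 ≤ r2)
    (c : ℤ → F) (hc : LaurentOn c r1 r2)
    (z0 : F) (hz0l : r1 ≤ ‖z0‖) (hz0r : ‖z0‖ ≤ r2) :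
    ‖lEval c z0‖ ≤ lNorm c ‖z0‖ ∧
      ∃ T : Finset ((integerRing hna) ⧸ (maxIdeal hna)),
        ∀ z : F, ‖z‖ = ‖z0‖ → ‖lEval c z‖ < lNorm c ‖z0‖ →
          ∀ w : integerRing hna, (w : F) = z / z0 →
            Ideal.Quotient.mk (maxIdeal hna) w ∈ T :=
  stmt0_general hna r1 r2 hr1 c hc z0 hz0l hz0r
end

section
/- Let a ∈ F and let f(z) = ∑_{j≥0} c_j (z−a)^j be a power series with coefficients in F with radius of convergence R, 0 < R ≤ ∞. Let b ∈ F with |b−a| < R. Then the power series ∑_{n≥0} D^n f(b) (z−b)^n also has radius of convergence R, and for every z with |z−b| < R it converges to f(z). -/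
open Filter Topology

variable {F : Type*} [NontriviallyNormedField F]

/-!
Since the absolute value is ultrametric, `|binom(j, n)| ≤ 1`. Hence every double series obtained
by expanding `(u + v)^k` with the binomial theorem has its `(n, j)` term bounded by
`|c_{n+j+m}| r^{n+j}`, which tends to `0` along the cofinite filter; in a complete ultrametric
field such a series is summable and may be summed along antidiagonals. This shows that
re-expanding at `a + u` and then at `(a + u) + v` is the same as re-expanding at `a + u + v`,
and the `0`-th coefficient of this identity is `f(z) = ∑ Dⁿf(b) (z - b)ⁿ`. The bound
`|Dⁿf(b)| rⁿ ≤ sup_{j ≥ n} |c_j| r^j` gives `R ≤` the new radius; re-expanding back at `a`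
gives the reverse inequality.
-/

open Finset

lemma tendsto_fst_add_snd_cofinite_atTop :
    Tendsto (fun p : ℕ × ℕ => p.1 + p.2) cofinite atTop :=
  tendsto_atTop.2 fun N => eventually_cofinite.2 <|
    ((Set.finite_Iio N).prod (Set.finite_Iio N)).subset fun p hp => by
      simp only [Set.mem_ofPred_eq, not_le, Set.mem_prod, Set.mem_Iio] at hp ⊢
      omega

lemma tendsto_cofinite_zero_of_norm_le_of_tendsto {E : Type*} [SeminormedAddCommGroup E]
    {f : ℕ × ℕ → E} {M : ℕ → ℝ} (hM : Tendsto M atTop (𝓝 0))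
    (hf : ∀ p, ‖f p‖ ≤ M (p.1 + p.2)) : Tendsto f cofinite (𝓝 0) :=
  tendsto_zero_iff_norm_tendsto_zero.2 <|
    squeeze_zero (fun _ => norm_nonneg _) hf (hM.comp tendsto_fst_add_snd_cofinite_atTop)

lemma Summable.tsum_tsum_eq_tsum_sum_antidiagonal {E : Type*} [AddCommGroup E] [UniformSpace E]
    [IsUniformAddGroup E] [CompleteSpace E] [T0Space E] {f : ℕ × ℕ → E} (hf : Summable f) :
    ∑' m, ∑' n, f (m, n) = ∑' k, ∑ p ∈ antidiagonal k, f p := by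
  rw [← hf.tsum_prod, ← HasAntidiagonal.sigmaAntidiagonalEquivProd.tsum_eq]
  exact (HasAntidiagonal.sigmaAntidiagonalEquivProd.summable_iff.2 hf).tsum_sigma.trans <|
    tsum_congr fun k => Finset.tsum_subtype (antidiagonal k) f

lemma norm_natCast_mul_le {R : Type*} [SeminormedRing R] [NormOneClass R] [IsUltrametricDist R]
    (k : ℕ) (x : R) : ‖(k : R) * x‖ ≤ ‖x‖ :=
  (norm_mul_le _ _).trans <|
    mul_le_of_le_one_left (norm_nonneg _) (IsUltrametricDist.norm_natCast_le_one R k)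

/-- `recenter c u n` is the `n`-th Hasse derivative at `a + u` of `∑ c j (z - a) ^ j`. -/
noncomputable def recenter (c : ℕ → F) (u : F) (n : ℕ) : F :=
  ∑' j : ℕ, ((j + n).choose n : F) * c (j + n) * u ^ j

lemma recenter_zero (c : ℕ → F) : recenter c 0 = c := by
  funext n
  rw [recenter, tsum_eq_single 0 fun j hj => by rw [zero_pow hj, mul_zero]]
  simp

lemma recenter_apply_zero (c : ℕ → F) (u : F) : recenter c u 0 = psEval c u := by
  simp [recenter, psEval]

lemma ofReal_le_convRadius {c : ℕ → F} {r : ℝ}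
    (hc : Tendsto (fun j => ‖c j‖ * r ^ j) atTop (𝓝 0)) : ENNReal.ofReal r ≤ convRadius c := by
  rcases le_or_gt 0 r with hr | hr
  · lift r to NNReal using hr
    rw [ENNReal.ofReal_coe_nnreal]
    exact le_iSup₂ (f := fun (r : NNReal)
      (_ : Tendsto (fun j => ‖c j‖ * (r : ℝ) ^ j) atTop (𝓝 0)) => (r : ENNReal)) r hc
  · rw [ENNReal.ofReal_of_nonpos hr.le]
    exact zero_le

lemma exists_tendsto_of_ofReal_lt_convRadius {c : ℕ → F} {x : ℝ}
    (hx : ENNReal.ofReal x < convRadius c) :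
    ∃ r : ℝ, x < r ∧ Tendsto (fun j => ‖c j‖ * r ^ j) atTop (𝓝 0) := by
  obtain ⟨r, hc, hxr⟩ : ∃ r : NNReal, ∃ _ : Tendsto (fun j => ‖c j‖ * (r : ℝ) ^ j) atTop (𝓝 0),
      ENNReal.ofReal x < r := by
    simpa only [convRadius, lt_iSup_iff] using hx
  rw [← ENNReal.ofReal_coe_nnreal] at hxr
  exact ⟨r, (ENNReal.ofReal_lt_ofReal_iff'.1 hxr).1, hc⟩

section Ultrametric

variable [IsUltrametricDist F] {c : ℕ → F} {u : F} {r : ℝ}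

lemma norm_recenter_term_le (hu : ‖u‖ ≤ r) (j n : ℕ) :
    ‖((j + n).choose n : F) * c (j + n) * u ^ j‖ ≤ ‖c (j + n)‖ * r ^ j := by
  rw [mul_assoc]
  refine (norm_natCast_mul_le _ _).trans ?_
  rw [norm_mul, norm_pow]
  gcongr

lemma norm_recenter_mul_pow_le (hr : 0 < r) (hu : ‖u‖ ≤ r) {n : ℕ} {ε : ℝ}
    (hc : ∀ m ≥ n, ‖c m‖ * r ^ m ≤ ε) : ‖recenter c u n‖ * r ^ n ≤ ε := by
  rw [← le_div_iff₀ (pow_pos hr n)]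
  refine IsUltrametricDist.norm_tsum_le_of_forall_le fun j => ?_
  rw [le_div_iff₀ (pow_pos hr n)]
  calc ‖((j + n).choose n : F) * c (j + n) * u ^ j‖ * r ^ n
      ≤ ‖c (j + n)‖ * r ^ j * r ^ n := by gcongr; exact norm_recenter_term_le hu j n
    _ = ‖c (j + n)‖ * r ^ (j + n) := by rw [pow_add, mul_assoc]
    _ ≤ ε := hc _ (Nat.le_add_left n j)

lemma tendsto_norm_recenter_mul_pow (hr : 0 < r)
    (hc : Tendsto (fun j => ‖c j‖ * r ^ j) atTop (𝓝 0)) (hu : ‖u‖ ≤ r) :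
    Tendsto (fun n => ‖recenter c u n‖ * r ^ n) atTop (𝓝 0) := by
  refine tendsto_order.2 ⟨fun a ha => Eventually.of_forall fun n => ha.trans_le (by positivity),
    fun ε hε => ?_⟩
  obtain ⟨N, hN⟩ := eventually_atTop.1 (hc.eventually (ge_mem_nhds (half_pos hε)))
  filter_upwards [eventually_ge_atTop N] with n hn
  exact (norm_recenter_mul_pow_le hr hu fun m hm => hN m (hn.trans hm)).trans_lt (half_lt_self hε)

lemma recenter_recenter [CompleteSpace F] {v : F} (hr : 0 < r)
    (hc : Tendsto (fun j => ‖c j‖ * r ^ j) atTop (𝓝 0)) (hu : ‖u‖ ≤ r) (hv : ‖v‖ ≤ r) :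
    recenter (recenter c u) v = recenter c (u + v) := by
  funext m
  set f : ℕ × ℕ → F := fun p => ((p.1 + m).choose m : F) *
      (((p.2 + (p.1 + m)).choose (p.1 + m) : F) * c (p.2 + (p.1 + m)) * u ^ p.2) * v ^ p.1
    with hf_def
  have hM : Tendsto (fun s => ‖c (s + m)‖ * r ^ s) atTop (𝓝 0) := by
    simpa [pow_add, mul_assoc, (pow_pos hr m).ne'] using
      (hc.comp (tendsto_add_atTop_nat m)).mul_const (r ^ m)⁻¹
  have hbound : ∀ p : ℕ × ℕ, ‖f p‖ ≤ ‖c (p.1 + p.2 + m)‖ * r ^ (p.1 + p.2) := by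
    rintro ⟨n, j⟩
    calc ‖f (n, j)‖
        ≤ ‖((j + (n + m)).choose (n + m) : F) * c (j + (n + m)) * u ^ j‖ * ‖v‖ ^ n := by
          rw [hf_def, norm_mul _ (v ^ n), norm_pow]
          gcongr
          exact norm_natCast_mul_le _ _
      _ ≤ ‖c (j + (n + m))‖ * r ^ j * r ^ n := by
          gcongr
          exact norm_recenter_term_le hu j (n + m)
      _ = ‖c (n + j + m)‖ * r ^ (n + j) := by
          rw [show n + j + m = j + (n + m) by omega, pow_add]
          ring
  have hsum : Summable f := NonarchimedeanAddGroup.summable_of_tendsto_cofinite_zero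
    (tendsto_cofinite_zero_of_norm_le_of_tendsto hM hbound)
  have hanti (k : ℕ) :
      ∑ p ∈ antidiagonal k, f p = ((k + m).choose m : F) * c (k + m) * (u + v) ^ k := by
    rw [add_comm u v, (Commute.all v u).add_pow', Finset.mul_sum]
    refine Finset.sum_congr rfl fun ⟨n, j⟩ hp => ?_
    obtain rfl : n + j = k := mem_antidiagonal.1 hp
    have hchoose : ((n + m).choose m : F) * ((n + j + m).choose (n + m) : F)
        = ((n + j + m).choose m : F) * ((n + j).choose n : F) := by
      have := Nat.choose_mul (n := n + j + m) (k := n + m) (s := m) (by omega)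
      rw [show n + j + m - m = n + j by omega, Nat.add_sub_cancel] at this
      rw [← Nat.cast_mul, ← Nat.cast_mul, mul_comm, this]
    simp only [hf_def, nsmul_eq_mul, show j + (n + m) = n + j + m by omega]
    linear_combination (c (n + j + m) * u ^ j * v ^ n) * hchoose
  calc recenter (recenter c u) v m = ∑' n, ∑' j, f (n, j) := by
        refine tsum_congr fun n => ?_
        rw [recenter, ← tsum_mul_left, ← tsum_mul_right]
    _ = ∑' k, ∑ p ∈ antidiagonal k, f p := hsum.tsum_tsum_eq_tsum_sum_antidiagonal
    _ = recenter c (u + v) m := tsum_congr hanti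

lemma psEval_recenter [CompleteSpace F] {w : F} (hr : 0 < r)
    (hc : Tendsto (fun j => ‖c j‖ * r ^ j) atTop (𝓝 0)) (hu : ‖u‖ ≤ r) (hw : ‖w‖ ≤ r) :
    psEval (recenter c u) w = psEval c (u + w) := by
  rw [← recenter_apply_zero, ← recenter_apply_zero, recenter_recenter hr hc hu hw]

lemma convRadius_le_convRadius_recenter (hu : ENNReal.ofReal ‖u‖ < convRadius c) :
    convRadius c ≤ convRadius (recenter c u) := by
  refine le_of_forall_lt fun x hx => ?_
  obtain ⟨r, hr, hc⟩ := exists_tendsto_of_ofReal_lt_convRadius (x := max x.toReal ‖u‖)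
    (by rw [ENNReal.ofReal_max, ENNReal.ofReal_toReal hx.ne_top]; exact max_lt hx hu)
  have hr0 : 0 < r := (norm_nonneg u).trans_lt ((le_max_right _ _).trans_lt hr)
  calc x = ENNReal.ofReal x.toReal := (ENNReal.ofReal_toReal hx.ne_top).symm
    _ < ENNReal.ofReal r := (ENNReal.ofReal_lt_ofReal_iff hr0).2 ((le_max_left _ _).trans_lt hr)
    _ ≤ convRadius (recenter c u) := ofReal_le_convRadius <|
        tendsto_norm_recenter_mul_pow hr0 hc ((le_max_right _ _).trans hr.le)

end Ultrametric

theorem stmt1_general {F : Type*} [NontriviallyNormedField F] [CompleteSpace F]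
    (hna : IsNonarchimedean (fun x : F => ‖x‖))
    (a b : F) (c : ℕ → F)
    (hb : ENNReal.ofReal ‖b - a‖ < convRadius c) :
    convRadius (fun n : ℕ => ∑' j : ℕ, ((j + n).choose n : F) * c (j + n) * (b - a) ^ j)
        = convRadius c ∧
      ∀ z : F, ENNReal.ofReal ‖z - b‖ < convRadius c →
        psEval (fun n : ℕ => ∑' j : ℕ, ((j + n).choose n : F) * c (j + n) * (b - a) ^ j)
            (z - b)
          = psEval c (z - a) := by
  have : IsUltrametricDist F := .isUltrametricDist_of_isNonarchimedean_norm hna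
  obtain ⟨r, hr, hc⟩ := exists_tendsto_of_ofReal_lt_convRadius hb
  have hr0 : 0 < r := (norm_nonneg _).trans_lt hr
  have hle : convRadius c ≤ convRadius (recenter c (b - a)) := convRadius_le_convRadius_recenter hb
  have hge : convRadius (recenter c (b - a)) ≤ convRadius c := by
    have h := convRadius_le_convRadius_recenter (c := recenter c (b - a)) (u := -(b - a))
      (by rw [norm_neg]; exact hb.trans_le hle)
    rwa [recenter_recenter hr0 hc hr.le (by rw [norm_neg]; exact hr.le), add_neg_cancel,
      recenter_zero] at h
  refine ⟨le_antisymm hge hle, fun z hz => ?_⟩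
  obtain ⟨s, hs, hcs⟩ := exists_tendsto_of_ofReal_lt_convRadius (x := max ‖b - a‖ ‖z - b‖)
    (by rw [ENNReal.ofReal_max]; exact max_lt hb hz)
  calc psEval (recenter c (b - a)) (z - b) = psEval c (b - a + (z - b)) :=
        psEval_recenter ((norm_nonneg _).trans_lt ((le_max_left _ _).trans_lt hs)) hcs
          ((le_max_left _ _).trans hs.le) ((le_max_right _ _).trans hs.le)
    _ = psEval c (z - a) := by rw [sub_add_sub_cancel']

/-- **Change of center for power series.** If `f(z) = ∑ c_j (z-a)^j` has radius of
convergence `R` with `0 < R ≤ ∞` and `|b - a| < R`, then `∑ Dⁿf(b) (z-b)^n` also has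
radius of convergence `R` and converges to `f(z)` for `|z - b| < R`.  Here
`Dⁿf(b) = ∑_{j≥n} binom(j,n) c_j (b-a)^{j-n}` is the `n`-th Hasse derivative at `b`. -/
theorem stmt1 {F : Type*} [NontriviallyNormedField F] [CompleteSpace F] [IsAlgClosed F]
    (hna : IsNonarchimedean (fun x : F => ‖x‖))
    (a b : F) (c : ℕ → F)
    (hR : 0 < convRadius c)
    (hb : ENNReal.ofReal ‖b - a‖ < convRadius c) :
    convRadius (fun n : ℕ => ∑' j : ℕ, ((j + n).choose n : F) * c (j + n) * (b - a) ^ j)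
        = convRadius c ∧
      ∀ z : F, ENNReal.ofReal ‖z - b‖ < convRadius c →
        psEval (fun n : ℕ => ∑' j : ℕ, ((j + n).choose n : F) * c (j + n) * (b - a) ^ j)
            (z - b)
          = psEval c (z - a) :=
  stmt1_general hna a b c hb
end

section
/- Let f(z) = ∑_{n≥0} a_n z^n be analytic on the open unit ball B_{<1} of F, with f(0) = 0 and |f(z)| ≤ 1 for all z with |z| < 1. Then |f(z)| ≤ |z| for all z with |z| < 1, and |f'(0)| = |a_1| ≤ 1. -/
open Filter Topology

variable {F : Type*} [NontriviallyNormedField F]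

/-!
On the sphere `‖z‖ = ‖c‖` the roots of unity of an order `q` with `‖q‖ = 1` play the role of the
circle in Cauchy's integral formula: averaging `ζ^{-nk} f(ζ^k c)` over a primitive `q`-th root `ζ`
isolates the coefficients `a_m c^m` with `m ≡ n (mod q)`. Taking `q` beyond the point where the
terms of the series are small, `a_n c^n` dominates that sum ultrametrically, which gives the Cauchy
inequality `‖a_n‖ ‖c‖^n ≤ sup_{‖z‖ = ‖c‖} ‖f z‖`. Since `F` is algebraically closed, `‖c‖` can
be taken arbitrarily close to `1`, so every `‖a_n‖ ≤ 1`, and then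
`‖f z‖ ≤ max_{n ≥ 1} ‖a_n‖ ‖z‖^n ≤ ‖z‖`.
-/

open Finset

theorem summable_of_norm_le_of_tendsto {E : Type*} [NormedAddCommGroup E] [IsUltrametricDist E]
    [CompleteSpace E] {f : ℕ → E} {g : ℕ → ℝ} (hg : Tendsto g atTop (𝓝 0))
    (hf : ∀ m, ‖f m‖ ≤ g m) : Summable f :=
  NonarchimedeanAddGroup.summable_of_tendsto_cofinite_zero <| by
    rw [Nat.cofinite_eq_atTop]
    exact squeeze_zero_norm hf hg

theorem exists_natCast_norm_eq_one [IsUltrametricDist F] (N : ℕ) :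
    ∃ q : ℕ, N < q ∧ ‖(q : F)‖ = 1 := by
  by_contra! h
  have hlt (q : ℕ) (hq : N < q) : ‖(q : F)‖ < 1 :=
    (IsUltrametricDist.norm_natCast_le_one F q).lt_of_ne (h q hq)
  have hone : (1 : F) = ((N + 2 : ℕ) : F) + -((N + 1 : ℕ) : F) := by
    push_cast
    ring
  have := (IsUltrametricDist.norm_add_le_max _ _).trans_lt
    (max_lt (hlt (N + 2) (by omega)) ((norm_neg _).trans_lt (hlt (N + 1) (by omega))))
  rw [← hone, norm_one] at this
  exact lt_irrefl _ this

theorem Nat.le_of_dvd_add_sub_of_ne {m n q : ℕ} (hn : n < q) (hmn : m ≠ n)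
    (h : q ∣ m + (q - n)) : q ≤ m := by
  obtain ⟨k, hk⟩ := h
  rcases Nat.lt_or_ge k 2 with hk2 | hk2
  · interval_cases k <;> omega
  · have := Nat.mul_le_mul_left q hk2
    omega

theorem IsUltrametricDist.norm_tsum_eq_of_forall_ne_le {E ι : Type*} [NormedAddCommGroup E]
    [IsUltrametricDist E] {f : ι → E} (hf : Summable f) {n : ι} {ε : ℝ} (hε0 : 0 ≤ ε)
    (hε : ε < ‖f n‖) (h : ∀ m ≠ n, ‖f m‖ ≤ ε) : ‖∑' m, f m‖ = ‖f n‖ := by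
  classical
  have hrest : ‖∑' m, if m = n then 0 else f m‖ < ‖f n‖ := by
    refine (norm_tsum_le_of_forall_le_of_nonneg hε0 fun m => ?_).trans_lt hε
    split_ifs with hm
    · simpa using hε0
    · exact h m hm
  rw [hf.tsum_eq_add_tsum_ite n, norm_add_eq_max_of_norm_ne_norm hrest.ne', max_eq_left hrest.le]

theorem IsPrimitiveRoot.geom_sum_pow_eq_ite {R : Type*} [CommRing R] [IsDomain R] {ζ : R}
    {q : ℕ} (hζ : IsPrimitiveRoot ζ q) (j : ℕ) :
    ∑ k ∈ range q, (ζ ^ j) ^ k = if q ∣ j then (q : R) else 0 := by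
  split_ifs with hj
  · simp [(hζ.pow_eq_one_iff_dvd j).2 hj]
  · have hne : ζ ^ j - 1 ≠ 0 := sub_ne_zero.2 (mt (hζ.pow_eq_one_iff_dvd j).1 hj)
    have hq : (ζ ^ j) ^ q - 1 = 0 := by
      rw [← pow_mul, mul_comm, pow_mul, hζ.pow_eq_one, one_pow, sub_self]
    exact (mul_eq_zero.1 ((mul_geom_sum _ q).trans hq)).resolve_left hne

theorem IsPrimitiveRoot.sum_pow_mul_psEval {ζ : F} {q : ℕ} (hζ : IsPrimitiveRoot ζ q) {a : ℕ → F}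
    {c : F} (hs : ∀ k, Summable fun m => a m * (ζ ^ k * c) ^ m) (j : ℕ) :
    ∑ k ∈ range q, ζ ^ (j * k) * psEval a (ζ ^ k * c) =
      q * ∑' m, if q ∣ m + j then a m * c ^ m else 0 := by
  have hterm (k m : ℕ) :
      ζ ^ (j * k) * (a m * (ζ ^ k * c) ^ m) = a m * c ^ m * (ζ ^ (m + j)) ^ k := by
    ring
  calc ∑ k ∈ range q, ζ ^ (j * k) * psEval a (ζ ^ k * c)
      = ∑' m, ∑ k ∈ range q, a m * c ^ m * (ζ ^ (m + j)) ^ k := by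
        rw [Summable.tsum_finsetSum fun k _ => ((hs k).mul_left (ζ ^ (j * k))).congr (hterm k)]
        simp only [psEval, ← tsum_mul_left, hterm]
    _ = ∑' m, q * if q ∣ m + j then a m * c ^ m else 0 := by
        congr 1
        ext m
        rw [← mul_sum, hζ.geom_sum_pow_eq_ite]
        split_ifs <;> ring
    _ = q * ∑' m, if q ∣ m + j then a m * c ^ m else 0 := tsum_mul_left

theorem norm_coeff_mul_pow_le [CompleteSpace F] [IsUltrametricDist F] [IsAlgClosed F]
    {a : ℕ → F} {c : F} {B : ℝ} (hc : Tendsto (fun m => ‖a m‖ * ‖c‖ ^ m) atTop (𝓝 0))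
    (hB : ∀ z : F, ‖z‖ = ‖c‖ → ‖psEval a z‖ ≤ B) (n : ℕ) : ‖a n‖ * ‖c‖ ^ n ≤ B := by
  have hB0 : 0 ≤ B := (norm_nonneg _).trans (hB c rfl)
  by_contra! hlt
  have hnorm (z : F) (m : ℕ) : ‖a m * z ^ m‖ = ‖a m‖ * ‖z‖ ^ m := by rw [norm_mul, norm_pow]
  have hε : 0 < ‖a n‖ * ‖c‖ ^ n / 2 := half_pos (hB0.trans_lt hlt)
  obtain ⟨N, hN⟩ := eventually_atTop.1 (hc.eventually (gt_mem_nhds hε))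
  obtain ⟨q, hq, hq1⟩ := exists_natCast_norm_eq_one (F := F) (max N n)
  have hq0 : q ≠ 0 := by omega
  have : NeZero (q : F) := ⟨norm_ne_zero_iff.1 (hq1 ▸ one_ne_zero)⟩
  obtain ⟨ζ, hζ⟩ := HasEnoughRootsOfUnity.exists_primitiveRoot F q
  have hζ1 : ‖ζ‖ = 1 := by
    rw [← pow_eq_one_iff_of_nonneg (norm_nonneg ζ) hq0, ← norm_pow, hζ.pow_eq_one, norm_one]
  have hsphere (k : ℕ) : ‖ζ ^ k * c‖ = ‖c‖ := by rw [norm_mul, norm_pow, hζ1, one_pow, one_mul]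
  -- `b` keeps the terms with `m ≡ n [MOD q]`
  set b : ℕ → F := fun m => if q ∣ m + (q - n) then a m * c ^ m else 0
  have hb : Summable b := summable_of_norm_le_of_tendsto hc fun m => by
    simp only [b]
    split_ifs
    · exact (hnorm c m).le
    · simp only [norm_zero]
      positivity
  have hmean : ‖(q : F) * ∑' m, b m‖ ≤ B := by
    rw [← hζ.sum_pow_mul_psEval fun k =>
      summable_of_norm_le_of_tendsto hc fun m => (hnorm _ m).trans_le (by rw [hsphere])]
    refine IsUltrametricDist.norm_sum_le_of_forall_le_of_nonneg hB0 fun k _ => ?_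
    rw [norm_mul, norm_pow, hζ1, one_pow, one_mul]
    exact hB _ (hsphere k)
  have hdom : ‖∑' m, b m‖ = ‖a n * c ^ n‖ := by
    have hbn : b n = a n * c ^ n := if_pos ⟨1, by omega⟩
    rw [← hbn]
    refine IsUltrametricDist.norm_tsum_eq_of_forall_ne_le hb hε.le
      (by rw [hbn, hnorm]; linarith) fun m hm => ?_
    simp only [b]
    split_ifs with hdvd
    · have hqm : q ≤ m := Nat.le_of_dvd_add_sub_of_ne (by omega) hm hdvd
      rw [hnorm]
      exact (hN m (by omega)).le
    · simpa using hε.le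
  rw [norm_mul, hq1, one_mul, hdom, hnorm] at hmean
  linarith

theorem exists_norm_mem_Ioo [IsAlgClosed F] {s : ℝ} (hs : s < 1) :
    ∃ c : F, s < ‖c‖ ∧ ‖c‖ < 1 := by
  obtain ⟨x, hx0, hx1⟩ := NormedField.exists_norm_lt_one F
  obtain ⟨k, hk⟩ := exists_pow_lt_of_lt_one hx0 hs
  have hk0 : k ≠ 0 := by
    rintro rfl
    rw [pow_zero] at hk
    linarith
  obtain ⟨c, hc⟩ := IsAlgClosed.exists_pow_nat_eq x (Nat.pos_of_ne_zero hk0)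
  have hck : ‖c‖ ^ k = ‖x‖ := by rw [← norm_pow, hc]
  exact ⟨c, lt_of_pow_lt_pow_left₀ k (norm_nonneg c) (hck ▸ hk),
    (pow_lt_one_iff_of_nonneg (norm_nonneg c) hk0).1 (hck ▸ hx1)⟩

theorem le_of_forall_norm_lt_one_mul_pow_le [IsAlgClosed F] {x y : ℝ} (hx : 0 ≤ x) (n : ℕ)
    (h : ∀ c : F, 0 < ‖c‖ → ‖c‖ < 1 → x * ‖c‖ ^ n ≤ y) : x ≤ y := by
  have hr : ∀ r ∈ Set.Ico (0 : ℝ) 1, x * r ^ n ≤ y := by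
    rintro r ⟨hr0, hr1⟩
    obtain ⟨c, hrc, hc1⟩ := exists_norm_mem_Ioo (F := F) hr1
    exact (mul_le_mul_of_nonneg_left (pow_le_pow_left₀ hr0 hrc.le n) hx).trans
      (h c (hr0.trans_lt hrc) hc1)
  have hlim : Tendsto (fun r : ℝ => x * r ^ n) (𝓝[<] 1) (𝓝 (x * 1 ^ n)) :=
    ((continuous_const.mul (continuous_pow n)).tendsto 1).mono_left nhdsWithin_le_nhds
  simpa using le_of_tendsto hlim (eventually_of_mem (Ico_mem_nhdsLT one_pos) hr)

theorem psEval_zero (a : ℕ → F) : psEval a 0 = a 0 := by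
  rw [psEval, tsum_eq_single 0 fun n hn => by rw [zero_pow hn, mul_zero]]
  simp

theorem norm_psEval_le_norm [IsUltrametricDist F] {a : ℕ → F} (h0 : a 0 = 0)
    (ha : ∀ n, ‖a n‖ ≤ 1) {z : F} (hz : ‖z‖ ≤ 1) : ‖psEval a z‖ ≤ ‖z‖ :=
  IsUltrametricDist.norm_tsum_le_of_forall_le_of_nonneg (norm_nonneg z) fun n => by
    rcases n with _ | n
    · simp [h0]
    · calc ‖a (n + 1) * z ^ (n + 1)‖ = ‖a (n + 1)‖ * ‖z‖ ^ (n + 1) := by rw [norm_mul, norm_pow]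
        _ ≤ 1 * ‖z‖ ^ 1 := mul_le_mul (ha _) (pow_le_pow_of_le_one (norm_nonneg z) hz (by omega))
            (by positivity) zero_le_one
        _ = ‖z‖ := by ring

/-- **Schwarz lemma.** If `f` is analytic on `B_{<1}`, `f(0) = 0` and `|f(z)| ≤ 1` for
all `|z| < 1`, then `|f(z)| ≤ |z|` for all `|z| < 1` and `|f'(0)| = |a₁| ≤ 1`. -/
theorem stmt4 {F : Type*} [NontriviallyNormedField F] [CompleteSpace F] [IsAlgClosed F]
    (hna : IsNonarchimedean (fun x : F => ‖x‖))
    (a : ℕ → F) (ha : PSOnOpen a 1)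
    (h0 : psEval a 0 = 0)
    (hb : ∀ z : F, ‖z‖ < 1 → ‖psEval a z‖ ≤ 1) :
    (∀ z : F, ‖z‖ < 1 → ‖psEval a z‖ ≤ ‖z‖) ∧ ‖a 1‖ ≤ 1 := by
  have : IsUltrametricDist F := IsUltrametricDist.isUltrametricDist_of_isNonarchimedean_norm hna
  have hcoeff (n : ℕ) : ‖a n‖ ≤ 1 :=
    le_of_forall_norm_lt_one_mul_pow_le (norm_nonneg _) n fun c hc0 hc1 =>
      norm_coeff_mul_pow_le (ha _ hc0 hc1) (fun z hz => hb z (hz.trans_lt hc1)) n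
  exact ⟨fun z hz => norm_psEval_le_norm (psEval_zero a ▸ h0) hcoeff hz.le, hcoeff 1⟩
end

section
/- Let f be a nonzero Laurent series analytic on the annulus A[r1,r2] with 0 < r1 ≤ r2. Call r ∈ [r1,r2] a critical radius of f if K(f,r) > k(f,r). Then the set of critical radii of f is discrete in [r1,r2]: every critical radius r' has an open neighborhood in ℝ containing no other critical radius of f. -/
open Filter Topology

variable {F : Type*} [NontriviallyNormedField F]

/-! For `r < s` in the annulus, `K(f,r) ≤ k(f,s)`: going from radius `r` to `s` multiplies the
ratio of the terms of indices `m > n` by `(s/r)^(m-n) > 1`, so no term of index below `K(f,r)`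
can dominate at `s`. Hence `K(f,·)` strictly increases along the critical radii, with values in
the finite interval `[k(f,r1), K(f,r2)]`; so there are finitely many critical radii, and a finite
set is discrete. -/

theorem exists_forall_le_of_tendsto_cofinite_zero_s7 {α : Type*} {f : α → ℝ}
    (hf : Tendsto f cofinite (𝓝 0)) {a : α} (ha : 0 < f a) : ∃ a₀, ∀ b, f b ≤ f a₀ := by
  have hlarge : Set.Finite {b | f a ≤ f b} := by
    simpa only [not_lt] using eventually_cofinite.mp (hf.eventually_lt_const ha)
  obtain ⟨a₀, ha₀, hmax⟩ := Set.exists_max_image _ f hlarge ⟨a, le_refl (f a)⟩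
  refine ⟨a₀, fun b => ?_⟩
  rcases le_or_gt (f a) (f b) with hb | hb
  · exact hmax b hb
  · exact hb.le.trans ha₀

theorem Set.Finite.exists_pos_forall_dist_lt_imp_eq {X : Type*} [MetricSpace X] {s : Set X}
    (hs : s.Finite) (x : X) : ∃ ε > 0, ∀ y ∈ s, dist y x < ε → y = x := by
  obtain ⟨ε, hε, hball⟩ :=
    Metric.isOpen_iff.mp (hs.sdiff (t := {x})).isClosed.isOpen_compl x (by simp)
  exact ⟨ε, hε, fun y hy hyx => by_contra fun hne => hball hyx ⟨hy, hne⟩⟩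

theorem mul_zpow_lt_mul_zpow_of_le {a b r s : ℝ} {m n : ℤ} (hb : 0 < b) (hnm : n < m)
    (hr : 0 < r) (hrs : r < s) (h : a * r ^ n ≤ b * r ^ m) : a * s ^ n < b * s ^ m := by
  have hs : s = r * (s / r) := by field_simp
  have hq : 1 < s / r := (one_lt_div hr).mpr hrs
  rw [hs, mul_zpow, mul_zpow, ← mul_assoc, ← mul_assoc]
  calc a * r ^ n * (s / r) ^ n ≤ b * r ^ m * (s / r) ^ n := by gcongr
    _ < b * r ^ m * (s / r) ^ m := by gcongr

namespace LaurentOn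

variable {c : ℤ → F} {r1 r2 r s : ℝ}

theorem mono {s1 s2 : ℝ} (hc : LaurentOn c r1 r2) (h1 : r1 ≤ s1) (h2 : s2 ≤ r2) :
    LaurentOn c s1 s2 :=
  fun r hr1 hr2 => hc r (h1.trans hr1) (hr2.trans h2)

theorem tendsto_term (hc : LaurentOn c r r) :
    Tendsto (fun n : ℤ => ‖c n‖ * r ^ n) cofinite (𝓝 0) :=
  hc r le_rfl le_rfl

theorem exists_lNorm_eq_term (hc : LaurentOn c r r) (hc0 : c ≠ 0) (hr : 0 < r) :
    ∃ n₀, (∀ n, ‖c n‖ * r ^ n ≤ ‖c n₀‖ * r ^ n₀) ∧ lNorm c r = ‖c n₀‖ * r ^ n₀ := by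
  obtain ⟨m, hm⟩ := Function.ne_iff.mp hc0
  obtain ⟨n₀, hn₀⟩ := exists_forall_le_of_tendsto_cofinite_zero_s7 hc.tendsto_term
    (mul_pos (norm_pos_iff.mpr hm) (zpow_pos hr m))
  exact ⟨n₀, hn₀, le_antisymm (ciSup_le hn₀) (le_ciSup ⟨_, Set.forall_mem_range.mpr hn₀⟩ n₀)⟩

theorem term_le_lNorm (hc : LaurentOn c r r) (hc0 : c ≠ 0) (hr : 0 < r) (n : ℤ) :
    ‖c n‖ * r ^ n ≤ lNorm c r := by
  obtain ⟨n₀, hn₀, heq⟩ := hc.exists_lNorm_eq_term hc0 hr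
  exact heq ▸ hn₀ n

theorem lNorm_pos (hc : LaurentOn c r r) (hc0 : c ≠ 0) (hr : 0 < r) : 0 < lNorm c r := by
  obtain ⟨m, hm⟩ := Function.ne_iff.mp hc0
  exact (mul_pos (norm_pos_iff.mpr hm) (zpow_pos hr m)).trans_le (hc.term_le_lNorm hc0 hr m)

theorem finite_setOf_term_eq_lNorm (hc : LaurentOn c r r) (hc0 : c ≠ 0) (hr : 0 < r) :
    Set.Finite {n : ℤ | ‖c n‖ * r ^ n = lNorm c r} := by
  have hlarge : Set.Finite {n : ℤ | lNorm c r ≤ ‖c n‖ * r ^ n} := by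
    simpa only [not_lt] using
      eventually_cofinite.mp (hc.tendsto_term.eventually_lt_const (hc.lNorm_pos hc0 hr))
  exact hlarge.subset fun n hn => hn.ge

theorem nonempty_setOf_term_eq_lNorm (hc : LaurentOn c r r) (hc0 : c ≠ 0) (hr : 0 < r) :
    Set.Nonempty {n : ℤ | ‖c n‖ * r ^ n = lNorm c r} := by
  obtain ⟨n₀, -, heq⟩ := hc.exists_lNorm_eq_term hc0 hr
  exact ⟨n₀, heq.symm⟩

theorem term_kk_eq_lNorm (hc : LaurentOn c r r) (hc0 : c ≠ 0) (hr : 0 < r) :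
    ‖c (kk c r)‖ * r ^ kk c r = lNorm c r :=
  (hc.nonempty_setOf_term_eq_lNorm hc0 hr).csInf_mem (hc.finite_setOf_term_eq_lNorm hc0 hr)

theorem term_KK_eq_lNorm (hc : LaurentOn c r r) (hc0 : c ≠ 0) (hr : 0 < r) :
    ‖c (KK c r)‖ * r ^ KK c r = lNorm c r :=
  (hc.nonempty_setOf_term_eq_lNorm hc0 hr).csSup_mem (hc.finite_setOf_term_eq_lNorm hc0 hr)

theorem kk_le_KK (hc : LaurentOn c r r) (hc0 : c ≠ 0) (hr : 0 < r) : kk c r ≤ KK c r :=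
  csInf_le (hc.finite_setOf_term_eq_lNorm hc0 hr).bddBelow (hc.term_KK_eq_lNorm hc0 hr)

theorem KK_le_kk_of_lt (hcr : LaurentOn c r r) (hcs : LaurentOn c s s) (hc0 : c ≠ 0)
    (hr : 0 < r) (hrs : r < s) : KK c r ≤ kk c s := by
  by_contra! hlt
  have hKK := hcr.term_KK_eq_lNorm hc0 hr
  have hcK : 0 < ‖c (KK c r)‖ :=
    (mul_pos_iff_of_pos_right (zpow_pos hr _)).mp (hKK ▸ hcr.lNorm_pos hc0 hr)
  have hdom : ‖c (kk c s)‖ * s ^ kk c s < ‖c (KK c r)‖ * s ^ KK c r :=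
    mul_zpow_lt_mul_zpow_of_le hcK hlt hr hrs (hKK ▸ hcr.term_le_lNorm hc0 hr _)
  exact (hcs.term_le_lNorm hc0 (hr.trans hrs) _).not_gt
    (hcs.term_kk_eq_lNorm hc0 (hr.trans hrs) ▸ hdom)

theorem kk_le_kk_of_le (hcr : LaurentOn c r r) (hcs : LaurentOn c s s) (hc0 : c ≠ 0)
    (hr : 0 < r) (hrs : r ≤ s) : kk c r ≤ kk c s := by
  rcases hrs.eq_or_lt with rfl | hlt
  · rfl
  · exact (hcr.kk_le_KK hc0 hr).trans (KK_le_kk_of_lt hcr hcs hc0 hr hlt)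

theorem KK_le_KK_of_le (hcr : LaurentOn c r r) (hcs : LaurentOn c s s) (hc0 : c ≠ 0)
    (hr : 0 < r) (hrs : r ≤ s) : KK c r ≤ KK c s := by
  rcases hrs.eq_or_lt with rfl | hlt
  · rfl
  · exact (KK_le_kk_of_lt hcr hcs hc0 hr hlt).trans (hcs.kk_le_KK hc0 (hr.trans hlt))

end LaurentOn

/-- The radii `r ∈ [r1, r2]` at which at least two terms of `c` attain the Gauss norm. -/
def criticalRadii (c : ℤ → F) (r1 r2 : ℝ) : Set ℝ :=
  {r | r1 ≤ r ∧ r ≤ r2 ∧ kk c r < KK c r}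

theorem LaurentOn.finite_criticalRadii {c : ℤ → F} {r1 r2 : ℝ} (hc : LaurentOn c r1 r2)
    (hc0 : c ≠ 0) (h1 : 0 < r1) : (criticalRadii c r1 r2).Finite := by
  have hcr {r : ℝ} (hr : r ∈ criticalRadii c r1 r2) : LaurentOn c r r := hc.mono hr.1 hr.2.1
  have hc1 {r : ℝ} (hr : r ∈ criticalRadii c r1 r2) : LaurentOn c r1 r1 :=
    hc.mono le_rfl (hr.1.trans hr.2.1)
  have hc2 {r : ℝ} (hr : r ∈ criticalRadii c r1 r2) : LaurentOn c r2 r2 :=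
    hc.mono (hr.1.trans hr.2.1) le_rfl
  have hmono : StrictMonoOn (KK c) (criticalRadii c r1 r2) := fun r hr s hs hrs =>
    (LaurentOn.KK_le_kk_of_lt (hcr hr) (hcr hs) hc0 (h1.trans_le hr.1) hrs).trans_lt hs.2.2
  have hmaps : Set.MapsTo (KK c) (criticalRadii c r1 r2) (Set.Icc (kk c r1) (KK c r2)) :=
    fun r hr => ⟨(LaurentOn.kk_le_kk_of_le (hc1 hr) (hcr hr) hc0 h1 hr.1).trans hr.2.2.le,
      LaurentOn.KK_le_KK_of_le (hcr hr) (hc2 hr) hc0 (h1.trans_le hr.1) hr.2.1⟩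
  exact Set.Finite.of_injOn hmaps hmono.injOn (Set.finite_Icc _ _)

theorem stmt7_general {F : Type*} [NontriviallyNormedField F]
    (r1 r2 : ℝ) (h1 : 0 < r1)
    (c : ℤ → F) (hc0 : c ≠ 0) (hc : LaurentOn c r1 r2)
    (r' : ℝ) :
    ∃ ε > (0 : ℝ), ∀ r : ℝ, r1 ≤ r → r ≤ r2 → kk c r < KK c r → |r - r'| < ε → r = r' := by
  obtain ⟨ε, hε, hiso⟩ := (hc.finite_criticalRadii hc0 h1).exists_pos_forall_dist_lt_imp_eq r'
  exact ⟨ε, hε, fun r hr1 hr2 hcrit hdist => hiso r ⟨hr1, hr2, hcrit⟩ hdist⟩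

/-- **Discreteness of critical radii.** For a nonzero Laurent series analytic on
`A[r1,r2]` with `0 < r1 ≤ r2`, every critical radius `r'` (a radius with
`k(f,r') < K(f,r')`) has a neighborhood containing no other critical radius. -/
theorem stmt7 {F : Type*} [NontriviallyNormedField F] [CompleteSpace F] [IsAlgClosed F]
    (hna : IsNonarchimedean (fun x : F => ‖x‖))
    (r1 r2 : ℝ) (h1 : 0 < r1) (h12 : r1 ≤ r2)
    (c : ℤ → F) (hc0 : c ≠ 0) (hc : LaurentOn c r1 r2)
    (r' : ℝ) (hr'1 : r1 ≤ r') (hr'2 : r' ≤ r2) (hcrit : kk c r' < KK c r') :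
    ∃ ε > (0 : ℝ), ∀ r : ℝ, r1 ≤ r → r ≤ r2 → kk c r < KK c r → |r - r'| < ε → r = r' :=
  stmt7_general r1 r2 h1 c hc0 hc r'
end

section
/- Let r > 0 and let f and g be nonzero Laurent series analytic on the annulus A[r,r]. Then K(fg,r) = K(f,r) + K(g,r) and k(fg,r) = k(f,r) + k(g,r). -/
open Filter Topology

variable {F : Type*} [NontriviallyNormedField F]

section AuxLemmas

variable {F : Type*} [NontriviallyNormedField F]

lemma auxFinite {c : ℤ → F} {r : ℝ}
    (hc : Tendsto (fun n : ℤ => ‖c n‖ * r ^ n) cofinite (nhds 0))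
    {ε : ℝ} (hε : 0 < ε) : {n : ℤ | ε ≤ ‖c n‖ * r ^ n}.Finite := by
  have h := Filter.mem_cofinite.mp (hc (Iio_mem_nhds hε))
  exact h.subset (fun n hn => by simpa [not_lt] using hn)

lemma gaussSpec {c : ℤ → F} {r : ℝ} (hr : 0 < r) (hc0 : c ≠ 0)
    (hc : Tendsto (fun n : ℤ => ‖c n‖ * r ^ n) cofinite (nhds 0)) :
    0 < lNorm c r ∧ (∀ n : ℤ, ‖c n‖ * r ^ n ≤ lNorm c r) ∧
      {n : ℤ | ‖c n‖ * r ^ n = lNorm c r}.Finite ∧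
      {n : ℤ | ‖c n‖ * r ^ n = lNorm c r}.Nonempty := by
  obtain ⟨n0, hn0⟩ : ∃ n, c n ≠ 0 := by
    by_contra h
    push_neg at h
    exact hc0 (funext h)
  have hT0 : 0 < ‖c n0‖ * r ^ n0 := mul_pos (norm_pos_iff.mpr hn0) (zpow_pos hr _)
  have hSfin := auxFinite hc hT0
  have hn0S : n0 ∈ {n : ℤ | ‖c n0‖ * r ^ n0 ≤ ‖c n‖ * r ^ n} := by simp only [Set.mem_setOf_eq]; exact le_refl _
  obtain ⟨N, hNS, hNmax⟩ := hSfin.toFinset.exists_max_image (fun n => ‖c n‖ * r ^ n)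
      ⟨n0, hSfin.mem_toFinset.mpr hn0S⟩
  have hmax : ∀ n : ℤ, ‖c n‖ * r ^ n ≤ ‖c N‖ * r ^ N := by
    intro n
    by_cases h : ‖c n0‖ * r ^ n0 ≤ ‖c n‖ * r ^ n
    · exact hNmax n (hSfin.mem_toFinset.mpr h)
    · exact le_trans (le_of_not_ge h) (hNmax n0 (hSfin.mem_toFinset.mpr hn0S))
  have hbdd : BddAbove (Set.range fun n : ℤ => ‖c n‖ * r ^ n) :=
    ⟨‖c N‖ * r ^ N, fun x hx => by obtain ⟨n, rfl⟩ := hx; exact hmax n⟩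
  have hln : lNorm c r = ‖c N‖ * r ^ N :=
    le_antisymm (ciSup_le hmax) (le_ciSup hbdd N)
  have hpos : 0 < lNorm c r := by
    rw [hln]; exact lt_of_lt_of_le hT0 (hNmax n0 (hSfin.mem_toFinset.mpr hn0S))
  refine ⟨hpos, fun n => hln ▸ hmax n, ?_, ⟨N, hln.symm⟩⟩
  apply hSfin.subset
  intro n hn
  have hn' : ‖c n‖ * r ^ n = ‖c N‖ * r ^ N := by
    rw [← hln]; exact hn
  have h2 : ‖c n0‖ * r ^ n0 ≤ ‖c N‖ * r ^ N := hNmax n0 (hSfin.mem_toFinset.mpr hn0S)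
  simpa [Set.mem_setOf_eq, hn'] using h2

lemma tsumNormLe {ι : Type*} (hna : IsNonarchimedean (fun x : F => ‖x‖)) {u : ι → F} {C : ℝ}
    (hC : 0 ≤ C) (h : ∀ i, ‖u i‖ ≤ C) : ‖∑' i, u i‖ ≤ C := by
  haveI := IsUltrametricDist.isUltrametricDist_of_isNonarchimedean_norm hna
  exact IsUltrametricDist.norm_tsum_le_of_forall_le_of_nonneg hC h

lemma tsumNormLt [CompleteSpace F] (hna : IsNonarchimedean (fun x : F => ‖x‖)) {u : ℤ → F} {C : ℝ}
    (hC : 0 < C) (hu : Tendsto (fun i : ℤ => ‖u i‖) cofinite (nhds 0))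
    (h : ∀ i, ‖u i‖ < C) : ‖∑' i, u i‖ < C := by
  classical
  haveI := IsUltrametricDist.isUltrametricDist_of_isNonarchimedean_norm hna
  have hsum : Summable u :=
    NonarchimedeanAddGroup.summable_of_tendsto_cofinite_zero
      (tendsto_zero_iff_norm_tendsto_zero.mpr hu)
  have hfin : {i : ℤ | C / 2 ≤ ‖u i‖}.Finite := by
    have h2 := Filter.mem_cofinite.mp (hu (Iio_mem_nhds (half_pos hC)))
    exact h2.subset (fun i hi => by simpa [not_lt] using hi)
  rw [← Summable.sum_add_tsum_compl (s := hfin.toFinset) hsum]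
  refine lt_of_le_of_lt (hna _ _) (max_lt ?_ ?_)
  · obtain ⟨i, hit, hile⟩ := IsUltrametricDist.exists_norm_finset_sum_le hfin.toFinset u
    exact lt_of_le_of_lt hile (h i)
  · refine lt_of_le_of_lt (tsumNormLe hna (half_pos hC).le ?_) (half_lt_self hC)
    rintro ⟨i, hi⟩
    have hi' : i ∉ {i : ℤ | C / 2 ≤ ‖u i‖} := by
      simpa [Set.Finite.mem_toFinset] using hi
    exact le_of_not_ge hi'

lemma tsumDominant [CompleteSpace F] (hna : IsNonarchimedean (fun x : F => ‖x‖)) {u : ℤ → F}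
    {i0 : ℤ} (hu : Tendsto (fun i : ℤ => ‖u i‖) cofinite (nhds 0))
    (h : ∀ i, i ≠ i0 → ‖u i‖ < ‖u i0‖) : ‖∑' i, u i‖ = ‖u i0‖ := by
  classical
  haveI := IsUltrametricDist.isUltrametricDist_of_isNonarchimedean_norm hna
  have hC : 0 < ‖u i0‖ := (norm_nonneg _).trans_lt (h (i0 + 1) (by omega))
  have hsum : Summable u :=
    NonarchimedeanAddGroup.summable_of_tendsto_cofinite_zero
      (tendsto_zero_iff_norm_tendsto_zero.mpr hu)
  have hrest : ‖∑' n : ℤ, if n = i0 then 0 else u n‖ < ‖u i0‖ := by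
    apply tsumNormLt hna hC
    · apply squeeze_zero (fun n => norm_nonneg _) (g := fun i : ℤ => ‖u i‖) ?_ hu
      intro n
      by_cases hn : n = i0 <;> simp [hn]
    · intro i
      by_cases hn : i = i0
      · simpa [hn] using hC
      · simpa [hn] using h i hn
  rw [Summable.tsum_eq_add_tsum_ite hsum i0]
  rw [IsUltrametricDist.norm_add_eq_max_of_norm_ne_norm (ne_of_lt hrest).symm]
  exact max_eq_left hrest.le

end AuxLemmas

/-- **Additivity of `K` and `k` under multiplication.** For nonzero Laurent series
`f, g` analytic on `A[r,r]` with `r > 0`, one has `K(fg,r) = K(f,r) + K(g,r)` and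
`k(fg,r) = k(f,r) + k(g,r)`. -/
theorem stmt8 {F : Type*} [NontriviallyNormedField F] [CompleteSpace F] [IsAlgClosed F]
    (hna : IsNonarchimedean (fun x : F => ‖x‖))
    (r : ℝ) (hr : 0 < r)
    (f g : ℤ → F) (hf0 : f ≠ 0) (hg0 : g ≠ 0)
    (hf : LaurentOn f r r) (hg : LaurentOn g r r) :
    KK (laurentMul f g) r = KK f r + KK g r ∧ kk (laurentMul f g) r = kk f r + kk g r := by
  classical
  haveI := IsUltrametricDist.isUltrametricDist_of_isNonarchimedean_norm hna
  have hfT := hf r le_rfl le_rfl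
  have hgT := hg r le_rfl le_rfl
  obtain ⟨hA, hfle, hEffin, hEfne⟩ := gaussSpec hr hf0 hfT
  obtain ⟨hB, hgle, hEgfin, hEgne⟩ := gaussSpec hr hg0 hgT
  set A := lNorm f r with hAdef
  set B := lNorm g r with hBdef
  have hrn : ∀ n : ℤ, (0 : ℝ) < r ^ n := fun n => zpow_pos hr n
  -- membership and bounds for K and k of f and g
  have hK1mem : KK f r ∈ {n : ℤ | ‖f n‖ * r ^ n = A} := hEfne.csSup_mem hEffin
  have hk1mem : kk f r ∈ {n : ℤ | ‖f n‖ * r ^ n = A} := hEfne.csInf_mem hEffin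
  have hK2mem : KK g r ∈ {n : ℤ | ‖g n‖ * r ^ n = B} := hEgne.csSup_mem hEgfin
  have hk2mem : kk g r ∈ {n : ℤ | ‖g n‖ * r ^ n = B} := hEgne.csInf_mem hEgfin
  have hfltK : ∀ n : ℤ, KK f r < n → ‖f n‖ * r ^ n < A := by
    intro n hn
    refine lt_of_le_of_ne (hfle n) (fun h => absurd (le_csSup hEffin.bddAbove h) (not_le.mpr hn))
  have hfltk : ∀ n : ℤ, n < kk f r → ‖f n‖ * r ^ n < A := by
    intro n hn
    refine lt_of_le_of_ne (hfle n) (fun h => absurd (csInf_le hEffin.bddBelow h) (not_le.mpr hn))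
  have hgltK : ∀ n : ℤ, KK g r < n → ‖g n‖ * r ^ n < B := by
    intro n hn
    refine lt_of_le_of_ne (hgle n) (fun h => absurd (le_csSup hEgfin.bddAbove h) (not_le.mpr hn))
  have hgltk : ∀ n : ℤ, n < kk g r → ‖g n‖ * r ^ n < B := by
    intro n hn
    refine lt_of_le_of_ne (hgle n) (fun h => absurd (csInf_le hEgfin.bddBelow h) (not_le.mpr hn))
  -- key identity
  have hkey : ∀ n i : ℤ, ‖f i * g (n - i)‖ * r ^ n
      = (‖f i‖ * r ^ i) * (‖g (n - i)‖ * r ^ (n - i)) := by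
    intro n i
    have h1 : r ^ n = r ^ i * r ^ (n - i) := by
      rw [← zpow_add₀ hr.ne']
      congr 1
      ring
    rw [norm_mul, h1]
    ring
  have heq : ∀ n i : ℤ, ‖f i * g (n - i)‖
      = ((‖f i‖ * r ^ i) * (‖g (n - i)‖ * r ^ (n - i))) * (r ^ n)⁻¹ := by
    intro n i
    rw [← hkey n i, mul_inv_cancel_right₀ (hrn n).ne']
  have hABpos : 0 < A * B := mul_pos hA hB
  -- tendsto of the term norms
  have hu0 : ∀ n : ℤ, Tendsto (fun i : ℤ => ‖f i * g (n - i)‖) cofinite (nhds 0) := by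
    intro n
    have hb : ∀ i : ℤ, ‖f i * g (n - i)‖ ≤ (‖f i‖ * r ^ i) * (B * (r ^ n)⁻¹) := by
      intro i
      rw [heq n i, mul_assoc]
      refine mul_le_mul_of_nonneg_left
        (mul_le_mul_of_nonneg_right (hgle _) (inv_nonneg.mpr (hrn n).le))
        (mul_nonneg (norm_nonneg _) (hrn i).le)
    refine squeeze_zero (fun i => norm_nonneg _) hb ?_
    simpa using hfT.mul_const (B * (r ^ n)⁻¹)
  -- strict product bounds
  have hmul1 : ∀ x y : ℝ, 0 ≤ x → x < A → y ≤ B → x * y < A * B := by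
    intro x y hx h1 h2
    exact lt_of_le_of_lt (mul_le_mul_of_nonneg_left h2 hx) (mul_lt_mul_of_pos_right h1 hB)
  have hmul2 : ∀ x y : ℝ, 0 ≤ y → x ≤ A → y < B → x * y < A * B := by
    intro x y hy h1 h2
    exact lt_of_le_of_lt (mul_le_mul_of_nonneg_right h1 hy) (mul_lt_mul_of_pos_left h2 hA)
  have hTnn : ∀ (c : ℤ → F) (m : ℤ), 0 ≤ ‖c m‖ * r ^ m :=
    fun c m => mul_nonneg (norm_nonneg _) (hrn m).le
  -- upper bound for the product
  have hhub : ∀ n : ℤ, ‖laurentMul f g n‖ * r ^ n ≤ A * B := by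
    intro n
    have h1 : ‖laurentMul f g n‖ ≤ (A * B) * (r ^ n)⁻¹ := by
      apply tsumNormLe hna (mul_nonneg hABpos.le (inv_nonneg.mpr (hrn n).le))
      intro i
      rw [heq n i]
      exact mul_le_mul_of_nonneg_right
        (mul_le_mul (hfle i) (hgle _) (hTnn g _) hA.le) (inv_nonneg.mpr (hrn n).le)
    calc ‖laurentMul f g n‖ * r ^ n ≤ ((A * B) * (r ^ n)⁻¹) * r ^ n :=
          mul_le_mul_of_nonneg_right h1 (hrn n).le
      _ = A * B := inv_mul_cancel_right₀ (hrn n).ne' _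
  -- strict bound criterion
  have hstrict : ∀ n : ℤ,
      (∀ i : ℤ, (‖f i‖ * r ^ i) * (‖g (n - i)‖ * r ^ (n - i)) < A * B) →
      ‖laurentMul f g n‖ * r ^ n < A * B := by
    intro n hn
    have h1 : ‖laurentMul f g n‖ < (A * B) * (r ^ n)⁻¹ := by
      apply tsumNormLt hna (mul_pos hABpos (inv_pos.mpr (hrn n))) (hu0 n)
      intro i
      rw [heq n i]
      exact mul_lt_mul_of_pos_right (hn i) (inv_pos.mpr (hrn n))
    calc ‖laurentMul f g n‖ * r ^ n < ((A * B) * (r ^ n)⁻¹) * r ^ n :=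
          mul_lt_mul_of_pos_right h1 (hrn n)
      _ = A * B := inv_mul_cancel_right₀ (hrn n).ne' _
  -- dominant-term criterion
  have hdom : ∀ n i0 : ℤ, ‖f i0‖ * r ^ i0 = A → ‖g (n - i0)‖ * r ^ (n - i0) = B →
      (∀ i : ℤ, i ≠ i0 → (‖f i‖ * r ^ i) * (‖g (n - i)‖ * r ^ (n - i)) < A * B) →
      ‖laurentMul f g n‖ * r ^ n = A * B := by
    intro n i0 hfi0 hgi0 hother
    have h2 : ‖laurentMul f g n‖ = ‖f i0 * g (n - i0)‖ := by
      apply tsumDominant hna (hu0 n)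
      intro i hi
      rw [heq n i, heq n i0, hfi0, hgi0]
      exact mul_lt_mul_of_pos_right (hother i hi) (inv_pos.mpr (hrn n))
    rw [h2, hkey n i0, hfi0, hgi0]
  -- the four key facts
  have hKmem : ‖laurentMul f g (KK f r + KK g r)‖ * r ^ (KK f r + KK g r) = A * B := by
    refine hdom _ (KK f r) hK1mem ?_ ?_
    · rw [add_sub_cancel_left]
      exact hK2mem
    · intro i hi
      rcases lt_or_gt_of_ne hi with h | h
      · refine hmul2 _ _ (hTnn g _) (hfle i) (hgltK _ (by omega))
      · exact hmul1 _ _ (hTnn f _) (hfltK i h) (hgle _)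
  have hkmem : ‖laurentMul f g (kk f r + kk g r)‖ * r ^ (kk f r + kk g r) = A * B := by
    refine hdom _ (kk f r) hk1mem ?_ ?_
    · rw [add_sub_cancel_left]
      exact hk2mem
    · intro i hi
      rcases lt_or_gt_of_ne hi with h | h
      · exact hmul1 _ _ (hTnn f _) (hfltk i h) (hgle _)
      · refine hmul2 _ _ (hTnn g _) (hfle i) (hgltk _ (by omega))
  have hKgt : ∀ n : ℤ, KK f r + KK g r < n → ‖laurentMul f g n‖ * r ^ n < A * B := by
    intro n hn
    apply hstrict n
    intro i
    rcases le_or_gt i (KK f r) with h | h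
    · exact hmul2 _ _ (hTnn g _) (hfle i) (hgltK _ (by omega))
    · exact hmul1 _ _ (hTnn f _) (hfltK i h) (hgle _)
  have hklt : ∀ n : ℤ, n < kk f r + kk g r → ‖laurentMul f g n‖ * r ^ n < A * B := by
    intro n hn
    apply hstrict n
    intro i
    rcases lt_or_ge i (kk f r) with h | h
    · exact hmul1 _ _ (hTnn f _) (hfltk i h) (hgle _)
    · exact hmul2 _ _ (hTnn g _) (hfle i) (hgltk _ (by omega))
  -- Gauss norm of the product
  have hbddh : BddAbove (Set.range fun n : ℤ => ‖laurentMul f g n‖ * r ^ n) :=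
    ⟨A * B, fun x hx => by obtain ⟨n, rfl⟩ := hx; exact hhub n⟩
  have hlh : lNorm (laurentMul f g) r = A * B := by
    refine le_antisymm (ciSup_le hhub) ?_
    rw [← hKmem]
    exact le_ciSup hbddh (KK f r + KK g r)
  constructor
  · have hmemE : (KK f r + KK g r)
        ∈ {n : ℤ | ‖laurentMul f g n‖ * r ^ n = lNorm (laurentMul f g) r} := by
      rw [Set.mem_setOf_eq, hlh]
      exact hKmem
    have hub : ∀ n ∈ {n : ℤ | ‖laurentMul f g n‖ * r ^ n = lNorm (laurentMul f g) r},
        n ≤ KK f r + KK g r := by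
      intro n hn
      by_contra hcon
      push_neg at hcon
      rw [Set.mem_setOf_eq, hlh] at hn
      exact absurd hn (hKgt n hcon).ne
    exact le_antisymm (csSup_le ⟨_, hmemE⟩ hub) (le_csSup ⟨_, hub⟩ hmemE)
  · have hmemE : (kk f r + kk g r)
        ∈ {n : ℤ | ‖laurentMul f g n‖ * r ^ n = lNorm (laurentMul f g) r} := by
      rw [Set.mem_setOf_eq, hlh]
      exact hkmem
    have hlb : ∀ n ∈ {n : ℤ | ‖laurentMul f g n‖ * r ^ n = lNorm (laurentMul f g) r},
        kk f r + kk g r ≤ n := by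
      intro n hn
      by_contra hcon
      push_neg at hcon
      rw [Set.mem_setOf_eq, hlh] at hn
      exact absurd hn (hklt n hcon).ne
    exact le_antisymm (csInf_le ⟨_, hlb⟩ hmemE) (le_csInf ⟨_, hmemE⟩ hlb)
end

section
/- Let r > 0 and let f be a nonzero Laurent series analytic on the annulus A[r,r] with K(f,r) = k(f,r). Then f is invertible in the ring of Laurent series analytic on A[r,r]: there exists a Laurent series g analytic on A[r,r] with fg = 1. -/
open Filter Topology

variable {F : Type*} [NontriviallyNormedField F]

/-!
Since `K(f,r) = k(f,r)`, the Gauss norm `|f|_r` is attained at a single index `N`. Dividing by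
`c_N z^N` turns `f` into `1 - h` with `|h|_r < 1`. The Gauss norm is submultiplicative for the
Cauchy product, so in the ultrametric setting the geometric series `∑ h^k` converges coefficientwise
to a Laurent series analytic on `A[r,r]`, and it inverts `1 - h`.
-/

section RealSequences

variable {ι κ : Type*}

lemma exists_forall_ge_of_tendsto_cofinite_zero [Nonempty ι] {w : ι → ℝ} (hw0 : ∀ i, 0 ≤ w i)
    (hw : Tendsto w cofinite (𝓝 0)) : ∃ i₀, ∀ i, w i ≤ w i₀ := by
  by_cases hpos : ∃ i₁, 0 < w i₁
  · obtain ⟨i₁, hi₁⟩ := hpos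
    have hfin : {i | w i₁ ≤ w i}.Finite := by
      simpa only [not_lt] using eventually_cofinite.mp (hw.eventually (gt_mem_nhds hi₁))
    obtain ⟨i₀, hi₀, hmax⟩ := Set.exists_max_image _ w hfin ⟨i₁, le_refl (w i₁)⟩
    refine ⟨i₀, fun i => ?_⟩
    by_cases hi : w i₁ ≤ w i
    · exact hmax i hi
    · exact (not_le.mp hi).le.trans hi₀
  · push Not at hpos
    exact ⟨Classical.arbitrary ι, fun i => (hpos i).trans (hw0 _)⟩

lemma tendsto_zero_of_forall_eventually_le {l : Filter ι} {w : ι → ℝ} (hw0 : ∀ i, 0 ≤ w i)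
    (h : ∀ ε > 0, ∀ᶠ i in l, w i ≤ ε) : Tendsto w l (𝓝 0) :=
  tendsto_order.2 ⟨fun _ ha => Eventually.of_forall fun i => ha.trans_le (hw0 i),
    fun ε hε => (h (ε / 2) (half_pos hε)).mono fun _ hi => hi.trans_lt (half_lt_self hε)⟩

lemma isBoundedUnder_norm_comp_of_tendsto {y : ι → ℝ} {a : ℝ} (hy : Tendsto y cofinite (𝓝 a))
    (l : Filter κ) (g : κ → ι) : IsBoundedUnder (· ≤ ·) l (fun k => ‖y (g k)‖) :=
  let ⟨C, hC⟩ := hy.norm.bddAbove_range_of_cofinite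
  isBoundedUnder_of ⟨C, fun k => hC ⟨g k, rfl⟩⟩

lemma tendsto_mul_cofinite_prod {x : ι → ℝ} {y : κ → ℝ} (hx : Tendsto x cofinite (𝓝 0))
    (hy : Tendsto y cofinite (𝓝 0)) :
    Tendsto (fun p : ι × κ => x p.1 * y p.2) cofinite (𝓝 0) := by
  rw [← coprod_cofinite, Filter.coprod, tendsto_sup]
  exact ⟨(hx.comp tendsto_comap).zero_mul_isBoundedUnder_le
      (isBoundedUnder_norm_comp_of_tendsto hy _ Prod.snd),
    isBoundedUnder_le_mul_tendsto_zero (isBoundedUnder_norm_comp_of_tendsto hx _ Prod.fst)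
      (hy.comp tendsto_comap)⟩

lemma eventually_forall_of_eventually_cofinite_prod {P : ι × κ → Prop}
    (h : ∀ᶠ p in cofinite, P p) : ∀ᶠ k in cofinite, ∀ i, P (i, k) := by
  rw [← coprod_cofinite] at h
  exact (eventually_comap.1 (h.filter_mono le_sup_right)).mono fun k hk i => hk (i, k) rfl

end RealSequences

section Laurent

variable {r : ℝ} {a b c : ℤ → F}

lemma laurentOn_self_iff :
    LaurentOn c r r ↔ Tendsto (fun n => ‖c n‖ * r ^ n) cofinite (𝓝 0) :=
  ⟨fun h => h r le_rfl le_rfl, fun h _ h₁ h₂ => le_antisymm h₂ h₁ ▸ h⟩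

lemma LaurentOn.norm_mul_zpow_le_lNorm (hc : LaurentOn c r r) (n : ℤ) :
    ‖c n‖ * r ^ n ≤ lNorm c r :=
  le_ciSup (laurentOn_self_iff.1 hc).bddAbove_range_of_cofinite n

lemma LaurentOn.exists_norm_mul_zpow_eq_lNorm (hr : 0 ≤ r) (hc : LaurentOn c r r) :
    ∃ N, ‖c N‖ * r ^ N = lNorm c r := by
  obtain ⟨N, hN⟩ := exists_forall_ge_of_tendsto_cofinite_zero (fun n => by positivity)
    (laurentOn_self_iff.1 hc)
  exact ⟨N, le_antisymm (hc.norm_mul_zpow_le_lNorm N) (ciSup_le hN)⟩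

lemma LaurentOn.const_mul_shift (hr : r ≠ 0) (hc : LaurentOn c r r) (d : F) (N : ℤ) :
    LaurentOn (fun n => d * c (n + N)) r r := by
  rw [laurentOn_self_iff] at hc ⊢
  have h := (hc.comp (add_left_injective N).tendsto_cofinite).const_mul (‖d‖ * r ^ (-N))
  rw [mul_zero] at h
  refine h.congr fun n => ?_
  simp only [Function.comp_apply, norm_mul, zpow_add₀ hr, zpow_neg]
  field_simp

lemma laurentOn_laurentOne : LaurentOn (laurentOne : ℤ → F) r r := by
  rw [laurentOn_self_iff]
  refine tendsto_const_nhds.congr' ?_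
  filter_upwards [(Set.finite_singleton (0 : ℤ)).compl_mem_cofinite] with n hn
  simp_all [laurentOne]

lemma laurentOne_laurentMul (b : ℤ → F) : laurentMul laurentOne b = b := by
  funext n
  rw [laurentMul, tsum_eq_single 0 fun i hi => by simp [laurentOne, hi]]
  simp [laurentOne]

lemma laurentMul_const_mul_shift (a b : ℤ → F) (d : F) (N : ℤ) :
    laurentMul a (fun n => d * b (n + N)) = laurentMul (fun n => d * a (n + N)) b := by
  funext n
  rw [laurentMul, laurentMul, ← (Equiv.addRight N).tsum_eq]
  refine tsum_congr fun j => ?_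
  rw [Equiv.coe_addRight, show n - (j + N) + N = n - j by ring]
  ring

lemma norm_mul_mul_zpow (hr : r ≠ 0) (x y : F) (i n : ℤ) :
    ‖x * y‖ * r ^ n = (‖x‖ * r ^ i) * (‖y‖ * r ^ (n - i)) := by
  rw [norm_mul, show r ^ n = r ^ i * r ^ (n - i) by rw [← zpow_add₀ hr, add_sub_cancel]]
  ring

lemma LaurentOn.exists_forall_ne_lt_of_KK_eq_kk (hr : 0 < r) (hc0 : c ≠ 0)
    (hc : LaurentOn c r r) (hKk : KK c r = kk c r) :
    ∃ N, ∀ n ≠ N, ‖c n‖ * r ^ n < ‖c N‖ * r ^ N := by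
  obtain ⟨N, hN⟩ := hc.exists_norm_mul_zpow_eq_lNorm hr.le
  have hpos : 0 < lNorm c r := by
    obtain ⟨m, hm⟩ := Function.ne_iff.1 hc0
    exact (mul_pos (norm_pos_iff.2 hm) (zpow_pos hr m)).trans_le (hc.norm_mul_zpow_le_lNorm m)
  set S := {n : ℤ | ‖c n‖ * r ^ n = lNorm c r}
  have hS : S.Finite := (eventually_cofinite.1
    ((laurentOn_self_iff.1 hc).eventually (gt_mem_nhds hpos))).subset fun n hn => hn.ge.not_gt
  have hS_eq : ∀ n ∈ S, n = kk c r := fun n hn =>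
    le_antisymm (hKk ▸ le_csSup hS.bddAbove hn) (csInf_le hS.bddBelow hn)
  refine ⟨N, fun n hn => ?_⟩
  rw [hN]
  exact (hc.norm_mul_zpow_le_lNorm n).lt_of_ne fun h => hn ((hS_eq n h).trans (hS_eq N hN).symm)

noncomputable def laurentPow (h : ℤ → F) : ℕ → ℤ → F
  | 0 => laurentOne
  | k + 1 => laurentMul h (laurentPow h k)

section Ultrametric

variable [IsUltrametricDist F]

lemma summable_of_tendsto_norm_mul_zpow [CompleteSpace F] {ι : Type*} (hr : r ≠ 0) {u : ι → F}
    {n : ℤ} (h : Tendsto (fun i => ‖u i‖ * r ^ n) cofinite (𝓝 0)) : Summable u := by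
  refine NonarchimedeanAddGroup.summable_of_tendsto_cofinite_zero
    (tendsto_zero_iff_norm_tendsto_zero.2 ?_)
  simpa [mul_inv_cancel_right₀ (zpow_ne_zero n hr)] using h.mul_const (r ^ n)⁻¹

lemma norm_tsum_mul_zpow_le {ι : Type*} [Nonempty ι] (hr : 0 < r) {u : ι → F} {n : ℤ} {C : ℝ}
    (h : ∀ i, ‖u i‖ * r ^ n ≤ C) : ‖∑' i, u i‖ * r ^ n ≤ C := by
  simp_rw [← le_div_iff₀ (zpow_pos hr n)] at h ⊢
  exact IsUltrametricDist.norm_tsum_le_of_forall_le h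

lemma norm_laurentMul_mul_zpow_le (hr : 0 < r) {A B : ℝ} (hA : 0 ≤ A)
    (ha : ∀ m, ‖a m‖ * r ^ m ≤ A) (hb : ∀ m, ‖b m‖ * r ^ m ≤ B) (n : ℤ) :
    ‖laurentMul a b n‖ * r ^ n ≤ A * B :=
  norm_tsum_mul_zpow_le hr fun i => by
    rw [norm_mul_mul_zpow hr.ne' _ _ i n]
    exact mul_le_mul (ha i) (hb (n - i)) (by positivity) hA

lemma LaurentOn.mul (hr : 0 < r) (ha : LaurentOn a r r) (hb : LaurentOn b r r) :
    LaurentOn (laurentMul a b) r r := by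
  rw [laurentOn_self_iff] at ha hb ⊢
  have hinj : Function.Injective fun p : ℤ × ℤ => (p.1, p.2 - p.1) := fun p q h => by
    simp only [Prod.mk.injEq] at h
    exact Prod.ext h.1 (by omega)
  have hu : Tendsto (fun p : ℤ × ℤ => (‖a p.1‖ * r ^ p.1) * (‖b (p.2 - p.1)‖ * r ^ (p.2 - p.1)))
      cofinite (𝓝 0) :=
    (tendsto_mul_cofinite_prod ha hb).comp hinj.tendsto_cofinite
  refine tendsto_zero_of_forall_eventually_le (fun n => by positivity) fun ε hε => ?_
  filter_upwards [eventually_forall_of_eventually_cofinite_prod (hu.eventually (ge_mem_nhds hε))]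
    with n hn
  exact norm_tsum_mul_zpow_le hr fun i => (norm_mul_mul_zpow hr.ne' _ _ i n).trans_le (hn i)

lemma LaurentOn.tsum (hr : 0 < r) {u : ℕ → ℤ → F} {β : ℕ → ℝ} (hu : ∀ k, LaurentOn (u k) r r)
    (huβ : ∀ k n, ‖u k n‖ * r ^ n ≤ β k) (hβ : Tendsto β atTop (𝓝 0)) :
    LaurentOn (fun n => ∑' k, u k n) r r := by
  rw [laurentOn_self_iff]
  refine tendsto_zero_of_forall_eventually_le (fun n => by positivity) fun ε hε => ?_
  obtain ⟨K, hK⟩ := eventually_atTop.1 (hβ.eventually (ge_mem_nhds hε))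
  have hhead : ∀ᶠ n in cofinite, ∀ k ∈ Finset.range K, ‖u k n‖ * r ^ n ≤ ε :=
    (eventually_all_finset _).2 fun k _ =>
      (laurentOn_self_iff.1 (hu k)).eventually (ge_mem_nhds hε)
  filter_upwards [hhead] with n hn
  refine norm_tsum_mul_zpow_le hr fun k => ?_
  rcases lt_or_ge k K with hk | hk
  · exact hn k (Finset.mem_range.2 hk)
  · exact (huβ k n).trans (hK k hk)

variable [CompleteSpace F]

lemma LaurentOn.summable_mul_sub (hr : 0 < r) (ha : LaurentOn a r r) (hb : LaurentOn b r r)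
    (n : ℤ) : Summable fun i => a i * b (n - i) := by
  rw [laurentOn_self_iff] at ha hb
  refine summable_of_tendsto_norm_mul_zpow hr.ne' (n := n) ?_
  refine (ha.zero_mul_isBoundedUnder_le (isBoundedUnder_norm_comp_of_tendsto hb _ (n - ·))).congr
    fun i => (norm_mul_mul_zpow hr.ne' _ _ i n).symm

lemma laurentMul_sub_left (hr : 0 < r) (ha : LaurentOn a r r) (hb : LaurentOn b r r)
    (hc : LaurentOn c r r) : laurentMul (a - b) c = laurentMul a c - laurentMul b c := by
  funext n
  simp only [laurentMul, Pi.sub_apply, sub_mul]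
  exact (ha.summable_mul_sub hr hc n).tsum_sub (hb.summable_mul_sub hr hc n)

lemma laurentMul_tsum (hr : 0 < r) {u : ℕ → ℤ → F} {β : ℕ → ℝ} (hc : LaurentOn c r r)
    (huβ : ∀ k n, ‖u k n‖ * r ^ n ≤ β k) (hβ : Tendsto β atTop (𝓝 0)) :
    laurentMul c (fun n => ∑' k, u k n) = fun n => ∑' k, laurentMul c (u k) n := by
  funext n
  have hsum : Summable (Function.uncurry fun i k => c i * u k (n - i)) := by
    refine summable_of_tendsto_norm_mul_zpow hr.ne' (n := n) (squeeze_zero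
      (fun _ => by positivity) (fun p => ?_)
      (tendsto_mul_cofinite_prod (laurentOn_self_iff.1 hc) (Nat.cofinite_eq_atTop ▸ hβ)))
    rw [Function.uncurry_apply_pair, norm_mul_mul_zpow hr.ne' _ _ p.1 n]
    exact mul_le_mul_of_nonneg_left (huβ _ _) (by positivity)
  simp only [laurentMul, ← tsum_mul_left]
  exact hsum.tsum_comm.symm

theorem exists_laurentMul_one_sub_eq_laurentOne (hr : 0 < r) {h : ℤ → F}
    (hh : LaurentOn h r r) (hh1 : lNorm h r < 1) :
    ∃ g, LaurentOn g r r ∧ laurentMul (laurentOne - h) g = laurentOne := by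
  set t := lNorm h r
  have ht0 : 0 ≤ t := le_trans (by positivity) (hh.norm_mul_zpow_le_lNorm 0)
  have ht : Tendsto (fun k => t ^ k) atTop (𝓝 0) := tendsto_pow_atTop_nhds_zero_of_lt_one ht0 hh1
  have hpow : ∀ k n, ‖laurentPow h k n‖ * r ^ n ≤ t ^ k := by
    intro k
    induction k with
    | zero => intro n; by_cases hn : n = 0 <;> simp [laurentPow, laurentOne, hn]
    | succ k ih =>
      rw [pow_succ']
      exact norm_laurentMul_mul_zpow_le hr ht0 hh.norm_mul_zpow_le_lNorm ih
  have hpowOn : ∀ k, LaurentOn (laurentPow h k) r r := by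
    intro k
    induction k with
    | zero => exact laurentOn_laurentOne
    | succ k ih => exact hh.mul hr ih
  set g : ℤ → F := fun n => ∑' k, laurentPow h k n
  have hhg : laurentMul h g = g - laurentOne := by
    rw [laurentMul_tsum hr hh hpow ht]
    funext n
    have hsum : Summable fun k => laurentPow h k n := summable_of_tendsto_norm_mul_zpow hr.ne'
      (squeeze_zero (fun _ => by positivity) (fun k => hpow k n) (Nat.cofinite_eq_atTop ▸ ht))
    show _ = (∑' k, laurentPow h k n) - laurentOne n
    rw [hsum.tsum_eq_zero_add]
    exact (add_sub_cancel_left _ _).symm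
  have hg : LaurentOn g r r := LaurentOn.tsum hr hpowOn hpow ht
  refine ⟨g, hg, ?_⟩
  rw [laurentMul_sub_left hr laurentOn_laurentOne hh hg, laurentOne_laurentMul, hhg, sub_sub_cancel]

lemma LaurentOn.exists_laurentMul_eq_laurentOne_of_apply_zero (hr : 0 < r) {e : ℤ → F}
    (he : LaurentOn e r r) (he0 : e 0 = 1) (he1 : ∀ n ≠ 0, ‖e n‖ * r ^ n < 1) :
    ∃ g, LaurentOn g r r ∧ laurentMul e g = laurentOne := by
  have hh_norm : ∀ n,
      ‖(laurentOne - e : ℤ → F) n‖ * r ^ n = if n = 0 then 0 else ‖e n‖ * r ^ n := by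
    intro n
    by_cases hn : n = 0 <;> simp [laurentOne, he0, hn]
  have hh : LaurentOn (laurentOne - e) r r := by
    rw [laurentOn_self_iff] at he ⊢
    refine squeeze_zero (fun n => by positivity) (fun n => ?_) he
    rw [hh_norm]
    split_ifs
    exacts [by positivity, le_rfl]
  obtain ⟨n₀, hn₀⟩ := hh.exists_norm_mul_zpow_eq_lNorm hr.le
  have hh1 : lNorm (laurentOne - e) r < 1 := by
    rw [← hn₀, hh_norm]
    split_ifs with h
    · exact one_pos
    · exact he1 n₀ h
  simpa only [sub_sub_cancel] using exists_laurentMul_one_sub_eq_laurentOne hr hh hh1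

lemma LaurentOn.exists_laurentMul_eq_laurentOne_of_dominant (hr : 0 < r) (hc : LaurentOn c r r)
    {N : ℤ} (hN : ∀ n ≠ N, ‖c n‖ * r ^ n < ‖c N‖ * r ^ N) :
    ∃ g, LaurentOn g r r ∧ laurentMul c g = laurentOne := by
  have hcN : c N ≠ 0 := by
    intro h0
    have h := hN (N + 1) (by omega)
    rw [h0, norm_zero, zero_mul] at h
    exact h.not_ge (by positivity)
  have he1 : ∀ n ≠ 0, ‖(c N)⁻¹ * c (n + N)‖ * r ^ n < 1 := by
    intro n hn
    have h := hN (n + N) (by omega)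
    rw [zpow_add₀ hr.ne', ← mul_assoc] at h
    rw [norm_mul, norm_inv, mul_assoc, inv_mul_lt_iff₀ (norm_pos_iff.2 hcN), mul_one]
    exact lt_of_mul_lt_mul_right h (zpow_pos hr N).le
  obtain ⟨g, hg, hmul⟩ := LaurentOn.exists_laurentMul_eq_laurentOne_of_apply_zero hr
    (hc.const_mul_shift hr.ne' (c N)⁻¹ N) (by simp [hcN]) he1
  exact ⟨fun n => (c N)⁻¹ * g (n + N), hg.const_mul_shift hr.ne' _ N,
    (laurentMul_const_mul_shift c g _ N).trans hmul⟩

end Ultrametric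

end Laurent

theorem stmt9_general {F : Type*} [NontriviallyNormedField F] [CompleteSpace F]
    (hna : IsNonarchimedean (fun x : F => ‖x‖))
    (r : ℝ) (hr : 0 < r)
    (f : ℤ → F) (hf0 : f ≠ 0) (hf : LaurentOn f r r) (hKk : KK f r = kk f r) :
    ∃ g : ℤ → F, LaurentOn g r r ∧ laurentMul f g = laurentOne := by
  have : IsUltrametricDist F := IsUltrametricDist.isUltrametricDist_of_isNonarchimedean_norm hna
  obtain ⟨N, hN⟩ := LaurentOn.exists_forall_ne_lt_of_KK_eq_kk hr hf0 hf hKk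
  exact LaurentOn.exists_laurentMul_eq_laurentOne_of_dominant hr hf hN

/-- If `f` is a nonzero Laurent series analytic on `A[r,r]` with `K(f,r) = k(f,r)`,
then `f` is invertible in the ring of Laurent series analytic on `A[r,r]`. -/
theorem stmt9 {F : Type*} [NontriviallyNormedField F] [CompleteSpace F] [IsAlgClosed F]
    (hna : IsNonarchimedean (fun x : F => ‖x‖))
    (r : ℝ) (hr : 0 < r)
    (f : ℤ → F) (hf0 : f ≠ 0) (hf : LaurentOn f r r) (hKk : KK f r = kk f r) :
    ∃ g : ℤ → F, LaurentOn g r r ∧ laurentMul f g = laurentOne :=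
  stmt9_general hna r hr f hf0 hf hKk
end

section
/- Let P ∈ F[z] be a nonzero polynomial and let r > 0. Then P has exactly K(P,r) − k(P,r) roots of absolute value r, counted with multiplicity; that is, if P(z) = c z^{m_0} ∏_j (z − a_j)^{m_j} with the a_j nonzero and distinct, then ∑_{j : |a_j| = r} m_j = K(P,r) − k(P,r). -/
open Filter Topology

variable {F : Type*} [NontriviallyNormedField F]

/-! By the ultrametric inequality, for `r > 0` the coefficient of `P * Q` in degree
`k(P,r) + k(Q,r)` contains exactly one term of maximal size `|P|_r |Q|_r`, while every coefficient
of lower degree consists of strictly smaller terms; the same holds above `K(P,r) + K(Q,r)`.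
Hence `k(·,r)` and `K(·,r)` are additive on nonzero polynomials. For a linear factor `X - a` they
are `[|a| < r]` and `[|a| ≤ r]`, so for a split polynomial `k(P,r)` counts the roots in the open
disc of radius `r` and `K(P,r)` those in the closed disc. -/

lemma Multiset.countP_le_eq_countP_lt_add_countP_eq {α β : Type*} [LinearOrder β] (f : α → β)
    (b : β) (s : Multiset α) :
    s.countP (f · ≤ b) = s.countP (f · < b) + s.countP (f · = b) := by
  induction s using Multiset.induction_on with
  | empty => simp
  | cons a s ih =>
    simp only [Multiset.countP_cons, ih]
    rcases lt_trichotomy (f a) b with h | h | h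
    · simp [h, h.le, h.ne]; omega
    · simp [h]; omega
    · simp [h.not_ge, h.not_gt, h.ne']

open Polynomial

section GaussNorm

variable {P : F[X]} {r : ℝ}

lemma pgNorm_eq_gaussNorm (P : F[X]) (hr : 0 ≤ r) :
    pgNorm P r = P.gaussNorm (IsAbsoluteValue.toAbsoluteValue (norm : F → ℝ)) r := by
  rw [← gaussNorm_coe_powerSeries _ _ hr, PowerSeries.gaussNorm_eq]
  simp [pgNorm]

lemma le_pgNorm (P : F[X]) (hr : 0 ≤ r) (n : ℕ) : ‖P.coeff n‖ * r ^ n ≤ pgNorm P r := by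
  rw [pgNorm_eq_gaussNorm P hr]
  exact P.le_gaussNorm (IsAbsoluteValue.toAbsoluteValue (norm : F → ℝ)) hr n

lemma exists_eq_pgNorm (P : F[X]) (hr : 0 ≤ r) : ∃ n, ‖P.coeff n‖ * r ^ n = pgNorm P r := by
  obtain ⟨n, hn⟩ := P.exists_eq_gaussNorm (IsAbsoluteValue.toAbsoluteValue (norm : F → ℝ)) r
  exact ⟨n, by rw [pgNorm_eq_gaussNorm P hr, hn]; rfl⟩

lemma pgNorm_pos (hP : P ≠ 0) (hr : 0 < r) : 0 < pgNorm P r :=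
  (mul_pos (norm_pos_iff.2 (leadingCoeff_ne_zero.2 hP)) (pow_pos hr _)).trans_le
    (le_pgNorm P hr.le P.natDegree)

lemma pgNorm_mul (hna : IsNonarchimedean (fun x : F => ‖x‖)) (hr : 0 < r) (P Q : F[X]) :
    pgNorm (P * Q) r = pgNorm P r * pgNorm Q r := by
  simp only [pgNorm_eq_gaussNorm _ hr.le]
  exact gaussNorm_mul hna hr P Q

lemma pgNorm_C (c : F) (hr : 0 ≤ r) : pgNorm (C c) r = ‖c‖ := by
  rw [pgNorm_eq_gaussNorm _ hr, gaussNorm_C]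
  rfl

lemma pgNorm_X_sub_C (a : F) (hr : 0 ≤ r) : pgNorm (X - C a) r = max ‖a‖ r := by
  refine le_antisymm (ciSup_le fun n => ?_) (max_le ?_ ?_)
  · rcases n with _ | _ | n <;> simp [coeff_X, coeff_C]
  · exact (by simp : ‖a‖ = ‖(X - C a).coeff 0‖ * r ^ 0).trans_le (le_pgNorm _ hr 0)
  · exact (by simp : r = ‖(X - C a).coeff 1‖ * r ^ 1).trans_le (le_pgNorm _ hr 1)

end GaussNorm

section ExtremeIndices

variable {P : F[X]} {r : ℝ} {n : ℕ}

lemma coeff_kP_eq_pgNorm (P : F[X]) (hr : 0 ≤ r) :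
    ‖P.coeff (kP P r)‖ * r ^ kP P r = pgNorm P r :=
  Nat.sInf_mem (exists_eq_pgNorm P hr)

lemma lt_pgNorm_of_lt_kP (hr : 0 ≤ r) (hn : n < kP P r) : ‖P.coeff n‖ * r ^ n < pgNorm P r :=
  (le_pgNorm P hr n).lt_of_ne (Nat.notMem_of_lt_sInf hn)

lemma kP_eq_of_forall_lt_pgNorm (hn : ‖P.coeff n‖ * r ^ n = pgNorm P r)
    (hlt : ∀ m < n, ‖P.coeff m‖ * r ^ m < pgNorm P r) : kP P r = n :=
  IsLeast.csInf_eq ⟨hn, fun m hm => not_lt.1 fun h => (hlt m h).ne hm⟩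

lemma bddAbove_setOf_eq_pgNorm (hP : P ≠ 0) (hr : 0 < r) :
    BddAbove {n | ‖P.coeff n‖ * r ^ n = pgNorm P r} :=
  ⟨P.natDegree, fun n hn => le_natDegree_of_ne_zero fun h0 =>
    (pgNorm_pos hP hr).ne' (by simpa [h0] using hn.symm)⟩

lemma coeff_KP_eq_pgNorm (hP : P ≠ 0) (hr : 0 < r) :
    ‖P.coeff (KP P r)‖ * r ^ KP P r = pgNorm P r :=
  Nat.sSup_mem (exists_eq_pgNorm P hr.le) (bddAbove_setOf_eq_pgNorm hP hr)

lemma lt_pgNorm_of_KP_lt (hP : P ≠ 0) (hr : 0 < r) (hn : KP P r < n) :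
    ‖P.coeff n‖ * r ^ n < pgNorm P r :=
  (le_pgNorm P hr.le n).lt_of_ne fun h => hn.not_ge (le_csSup (bddAbove_setOf_eq_pgNorm hP hr) h)

lemma KP_eq_of_forall_lt_pgNorm (hn : ‖P.coeff n‖ * r ^ n = pgNorm P r)
    (hgt : ∀ m, n < m → ‖P.coeff m‖ * r ^ m < pgNorm P r) : KP P r = n :=
  IsGreatest.csSup_eq ⟨hn, fun m hm => not_lt.1 fun h => (hgt m h).ne hm⟩

lemma kP_C (c : F) (hr : 0 ≤ r) : kP (C c) r = 0 :=
  kP_eq_of_forall_lt_pgNorm (by simp [pgNorm_C c hr]) fun _ hm => absurd hm (Nat.not_lt_zero _)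

lemma KP_C {c : F} (hc : c ≠ 0) (hr : 0 ≤ r) : KP (C c) r = 0 :=
  KP_eq_of_forall_lt_pgNorm (by simp [pgNorm_C c hr]) fun m hm => by
    simp [coeff_C, hm.ne', pgNorm_C c hr, hc]

lemma kP_X_sub_C (a : F) (hr : 0 ≤ r) : kP (X - C a) r = if ‖a‖ < r then 1 else 0 := by
  split_ifs with h
  · refine kP_eq_of_forall_lt_pgNorm (by simp [pgNorm_X_sub_C a hr, h.le]) fun m hm => ?_
    simpa [Nat.lt_one_iff.1 hm, pgNorm_X_sub_C a hr] using h
  · exact kP_eq_of_forall_lt_pgNorm (by simp [pgNorm_X_sub_C a hr, not_lt.1 h])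
      fun _ hm => absurd hm (Nat.not_lt_zero _)

lemma KP_X_sub_C (a : F) (hr : 0 < r) : KP (X - C a) r = if ‖a‖ ≤ r then 1 else 0 := by
  split_ifs with h
  · refine KP_eq_of_forall_lt_pgNorm (by simp [pgNorm_X_sub_C a hr.le, h]) fun m hm => ?_
    obtain ⟨m, rfl⟩ := Nat.exists_eq_add_of_lt hm
    simp [coeff_X, pgNorm_X_sub_C a hr.le, hr]
  · refine KP_eq_of_forall_lt_pgNorm (by simp [pgNorm_X_sub_C a hr.le, not_le.1 h |>.le])
      fun m hm => ?_
    rcases m with _ | _ | m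
    · omega
    · simpa [pgNorm_X_sub_C a hr.le] using not_le.1 h
    · simp [coeff_X, pgNorm_X_sub_C a hr.le, hr]

end ExtremeIndices

section Mul

open Finset

variable {P Q : F[X]} {r : ℝ}

lemma norm_coeff_mul_coeff_mul_pow_lt (hP : P ≠ 0) (hQ : Q ≠ 0) (hr : 0 < r) {i j : ℕ}
    (h : ‖P.coeff i‖ * r ^ i < pgNorm P r ∨ ‖Q.coeff j‖ * r ^ j < pgNorm Q r) :
    ‖P.coeff i * Q.coeff j‖ * r ^ (i + j) < pgNorm P r * pgNorm Q r := by
  have hPi := le_pgNorm P hr.le i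
  have hQj := le_pgNorm Q hr.le j
  rw [norm_mul, pow_add, mul_mul_mul_comm]
  rcases h with h | h
  · exact mul_lt_mul_of_lt_of_le_of_nonneg_of_pos h hQj (by positivity) (pgNorm_pos hQ hr)
  · exact mul_lt_mul' hPi h (by positivity) (pgNorm_pos hP hr)

variable (hna : IsNonarchimedean (fun x : F => ‖x‖))
include hna

lemma norm_coeff_mul_mul_pow_lt (hP : P ≠ 0) (hQ : Q ≠ 0) (hr : 0 < r) {n : ℕ}
    (h : ∀ x ∈ antidiagonal n,
      ‖P.coeff x.1‖ * r ^ x.1 < pgNorm P r ∨ ‖Q.coeff x.2‖ * r ^ x.2 < pgNorm Q r) :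
    ‖(P * Q).coeff n‖ * r ^ n < pgNorm P r * pgNorm Q r := by
  obtain ⟨x, hx, hle⟩ := hna.finset_image_add_of_nonempty (fun x => P.coeff x.1 * Q.coeff x.2)
    (⟨(n, 0), by simp⟩ : (antidiagonal n).Nonempty)
  rw [coeff_mul]
  calc ‖∑ x ∈ antidiagonal n, P.coeff x.1 * Q.coeff x.2‖ * r ^ n
      ≤ ‖P.coeff x.1 * Q.coeff x.2‖ * r ^ (x.1 + x.2) := by
        rw [HasAntidiagonal.mem_antidiagonal.1 hx]; gcongr
    _ < pgNorm P r * pgNorm Q r := norm_coeff_mul_coeff_mul_pow_lt hP hQ hr (h x hx)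

lemma norm_coeff_mul_mul_pow_eq (hP : P ≠ 0) (hQ : Q ≠ 0) (hr : 0 < r) {i j : ℕ}
    (hi : ‖P.coeff i‖ * r ^ i = pgNorm P r) (hj : ‖Q.coeff j‖ * r ^ j = pgNorm Q r)
    (h : ∀ x ∈ antidiagonal (i + j), x ≠ (i, j) →
      ‖P.coeff x.1‖ * r ^ x.1 < pgNorm P r ∨ ‖Q.coeff x.2‖ * r ^ x.2 < pgNorm Q r) :
    ‖(P * Q).coeff (i + j)‖ * r ^ (i + j) = pgNorm P r * pgNorm Q r := by
  have hij : ‖P.coeff i * Q.coeff j‖ * r ^ (i + j) = pgNorm P r * pgNorm Q r := by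
    rw [← hi, ← hj, norm_mul, pow_add]; ring
  rw [coeff_mul, hna.apply_sum_eq_of_lt (fun a => (norm_neg a).symm)
    (k := (i, j)) (by simp) fun x hx hne => ?_, hij]
  refine lt_of_mul_lt_mul_right ?_ (pow_nonneg hr.le (i + j))
  rw [hij, ← HasAntidiagonal.mem_antidiagonal.1 hx]
  exact norm_coeff_mul_coeff_mul_pow_lt hP hQ hr (h x hx hne)

lemma kP_mul (hP : P ≠ 0) (hQ : Q ≠ 0) (hr : 0 < r) :
    kP (P * Q) r = kP P r + kP Q r := by
  refine kP_eq_of_forall_lt_pgNorm ?_ fun m hm => ?_ <;> rw [pgNorm_mul hna hr]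
  · refine norm_coeff_mul_mul_pow_eq hna hP hQ hr (coeff_kP_eq_pgNorm P hr.le)
      (coeff_kP_eq_pgNorm Q hr.le) fun x hx hne => ?_
    have : x.1 < kP P r ∨ x.2 < kP Q r := by
      rw [HasAntidiagonal.mem_antidiagonal] at hx; rw [Ne, Prod.ext_iff] at hne; omega
    exact this.imp (lt_pgNorm_of_lt_kP hr.le) (lt_pgNorm_of_lt_kP hr.le)
  · refine norm_coeff_mul_mul_pow_lt hna hP hQ hr fun x hx => ?_
    have : x.1 < kP P r ∨ x.2 < kP Q r := by rw [HasAntidiagonal.mem_antidiagonal] at hx; omega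
    exact this.imp (lt_pgNorm_of_lt_kP hr.le) (lt_pgNorm_of_lt_kP hr.le)

lemma KP_mul (hP : P ≠ 0) (hQ : Q ≠ 0) (hr : 0 < r) :
    KP (P * Q) r = KP P r + KP Q r := by
  refine KP_eq_of_forall_lt_pgNorm ?_ fun m hm => ?_ <;> rw [pgNorm_mul hna hr]
  · refine norm_coeff_mul_mul_pow_eq hna hP hQ hr (coeff_KP_eq_pgNorm hP hr)
      (coeff_KP_eq_pgNorm hQ hr) fun x hx hne => ?_
    have : KP P r < x.1 ∨ KP Q r < x.2 := by
      rw [HasAntidiagonal.mem_antidiagonal] at hx; rw [Ne, Prod.ext_iff] at hne; omega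
    exact this.imp (lt_pgNorm_of_KP_lt hP hr) (lt_pgNorm_of_KP_lt hQ hr)
  · refine norm_coeff_mul_mul_pow_lt hna hP hQ hr fun x hx => ?_
    have : KP P r < x.1 ∨ KP Q r < x.2 := by rw [HasAntidiagonal.mem_antidiagonal] at hx; omega
    exact this.imp (lt_pgNorm_of_KP_lt hP hr) (lt_pgNorm_of_KP_lt hQ hr)

end Mul

section RootCount

variable {P : F[X]} {r : ℝ}

lemma multiset_prod_X_sub_C_ne_zero (s : Multiset F) : (s.map (X - C ·)).prod ≠ 0 :=
  (monic_multiset_prod_of_monic _ _ fun a _ => monic_X_sub_C a).ne_zero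

variable (hna : IsNonarchimedean (fun x : F => ‖x‖))
include hna

lemma kP_multiset_prod_X_sub_C (hr : 0 < r) (s : Multiset F) :
    kP (s.map (X - C ·)).prod r = s.countP (‖·‖ < r) := by
  induction s using Multiset.induction_on with
  | empty =>
    rw [Multiset.map_zero, Multiset.prod_zero, ← C_1, kP_C 1 hr.le, Multiset.countP_zero]
  | cons a s ih =>
    rw [Multiset.map_cons, Multiset.prod_cons,
      kP_mul hna (X_sub_C_ne_zero a) (multiset_prod_X_sub_C_ne_zero s) hr, ih, kP_X_sub_C a hr.le,
      Multiset.countP_cons, add_comm]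

lemma KP_multiset_prod_X_sub_C (hr : 0 < r) (s : Multiset F) :
    KP (s.map (X - C ·)).prod r = s.countP (‖·‖ ≤ r) := by
  induction s using Multiset.induction_on with
  | empty =>
    rw [Multiset.map_zero, Multiset.prod_zero, ← C_1, KP_C one_ne_zero hr.le,
      Multiset.countP_zero]
  | cons a s ih =>
    rw [Multiset.map_cons, Multiset.prod_cons,
      KP_mul hna (X_sub_C_ne_zero a) (multiset_prod_X_sub_C_ne_zero s) hr, ih, KP_X_sub_C a hr,
      Multiset.countP_cons, add_comm]

lemma kP_eq_countP_roots (hP : P ≠ 0) (hsplit : P.Splits) (hr : 0 < r) :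
    kP P r = P.roots.countP (‖·‖ < r) := by
  conv_lhs => rw [← C_leadingCoeff_mul_prod_multiset_X_sub_C (splits_iff_card_roots.1 hsplit)]
  rw [kP_mul hna (C_ne_zero.2 (leadingCoeff_ne_zero.2 hP)) (multiset_prod_X_sub_C_ne_zero _) hr,
    kP_C _ hr.le, zero_add, kP_multiset_prod_X_sub_C hna hr]

lemma KP_eq_countP_roots (hP : P ≠ 0) (hsplit : P.Splits) (hr : 0 < r) :
    KP P r = P.roots.countP (‖·‖ ≤ r) := by
  have hc : P.leadingCoeff ≠ 0 := leadingCoeff_ne_zero.2 hP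
  conv_lhs => rw [← C_leadingCoeff_mul_prod_multiset_X_sub_C (splits_iff_card_roots.1 hsplit)]
  rw [KP_mul hna (C_ne_zero.2 hc) (multiset_prod_X_sub_C_ne_zero _) hr, KP_C hc hr.le, zero_add,
    KP_multiset_prod_X_sub_C hna hr]

end RootCount

open scoped Classical in
theorem stmt10_general {F : Type*} [NontriviallyNormedField F] [IsAlgClosed F]
    (hna : IsNonarchimedean (fun x : F => ‖x‖))
    (P : Polynomial F) (hP : P ≠ 0) (r : ℝ) (hr : 0 < r) :
    (((P.roots.filter fun z : F => ‖z‖ = r).card : ℤ)) = (KP P r : ℤ) - (kP P r : ℤ) := by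
  rw [KP_eq_countP_roots hna hP (IsAlgClosed.splits P) hr,
    kP_eq_countP_roots hna hP (IsAlgClosed.splits P) hr,
    Multiset.countP_le_eq_countP_lt_add_countP_eq, Nat.cast_add, add_sub_cancel_left,
    Multiset.countP_eq_card_filter]

open scoped Classical in
/-- **Valuation polygon for polynomials.** A nonzero polynomial `P` has exactly
`K(P,r) − k(P,r)` roots of absolute value `r`, counted with multiplicity. -/
theorem stmt10 {F : Type*} [NontriviallyNormedField F] [CompleteSpace F] [IsAlgClosed F]
    (hna : IsNonarchimedean (fun x : F => ‖x‖))
    (P : Polynomial F) (hP : P ≠ 0) (r : ℝ) (hr : 0 < r) :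
    (((P.roots.filter fun z : F => ‖z‖ = r).card : ℤ)) = (KP P r : ℤ) - (kP P r : ℤ) :=
  stmt10_general hna P hP r hr
end
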